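/- arXiv:2508.18744 — 5 statements merged into one kernel-verified Lean document; each statement's English description precedes it below -/
import Mathlib

section
/- Let T > 0 and suppose that for i = 1, 2 the pairs (l^i, r^i) satisfy Assumption (A) with common constants 0 < c < C < ∞. Given continuous functions s^i : [0,T] → ℝ, let (x^i, K^i) be a solution of the Skorokhod problem SP_{l^i}^{r^i}(s^i), i = 1, 2. Then sup_{t∈[0,T]} |K¹_t − K²_t| ≤ (C/c) · sup_{t∈[0,T]} |s¹_t − s²_t| + (1/c) · max(L̄_T, R̄_T), where L̄_T = sup_{(t,x)∈[0,T]×ℝ} |l¹(t,x) − l²(t,x)| and R̄_T = sup_{(t,x)∈[0,T]×ℝ} |r¹(t,x) − r²(t,x)|. -/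
open MeasureTheory Set

noncomputable section

/-- Assumption (A) on the reflecting boundary functions `l, r` with constants `c < C`:
time-continuity, two-sided Lipschitz/monotonicity bounds, and uniform separation. -/
def AssumptionA (T c C : ℝ) (l r : ℝ → ℝ → ℝ) : Prop :=
  (∀ x : ℝ, ContinuousOn (fun t => l t x) (Icc 0 T) ∧
      ContinuousOn (fun t => r t x) (Icc 0 T)) ∧
  (∀ t ∈ Icc (0:ℝ) T, ∀ x y : ℝ, y ≤ x →
      (c * (x - y) ≤ l t x - l t y ∧ l t x - l t y ≤ C * (x - y)) ∧
      (c * (x - y) ≤ r t x - r t y ∧ r t x - r t y ≤ C * (x - y))) ∧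
  (∃ ε : ℝ, 0 < ε ∧ ∀ t ∈ Icc (0:ℝ) T, ∀ x : ℝ, ε ≤ r t x - l t x)

/-- `(x, K)` solves the Skorokhod problem `SP_l^r(s)` on `[0,T]`. -/
def IsSkorokhodSolution (T : ℝ) (l r : ℝ → ℝ → ℝ) (s x K : ℝ → ℝ) : Prop :=
  ContinuousOn x (Icc 0 T) ∧ ContinuousOn K (Icc 0 T) ∧
  (∀ t ∈ Icc (0:ℝ) T, x t = s t + K t) ∧
  (∀ t ∈ Icc (0:ℝ) T, l t (x t) ≤ 0 ∧ 0 ≤ r t (x t)) ∧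
  ∃ Kr Kl : StieltjesFunction ℝ,
    Continuous ⇑Kr ∧ Continuous ⇑Kl ∧ Kr 0 = 0 ∧ Kl 0 = 0 ∧
    (∀ t ∈ Icc (0:ℝ) T, K t = Kr t - Kl t) ∧
    Kl.measure {t ∈ Icc (0:ℝ) T | l t (x t) < 0} = 0 ∧
    Kr.measure {t ∈ Icc (0:ℝ) T | 0 < r t (x t)} = 0

/-- `(x, k)` solves the backward Skorokhod problem `BSP_l^r(s, a)` on `[0,T]`. -/
def IsBackwardSkorokhodSolution (T : ℝ) (l r : ℝ → ℝ → ℝ) (s : ℝ → ℝ) (a : ℝ)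
    (x k : ℝ → ℝ) : Prop :=
  ContinuousOn x (Icc 0 T) ∧ ContinuousOn k (Icc 0 T) ∧
  (∀ t ∈ Icc (0:ℝ) T, x t = a + s T - s t + (k T - k t)) ∧
  (∀ t ∈ Icc (0:ℝ) T, l t (x t) ≤ 0 ∧ 0 ≤ r t (x t)) ∧
  k 0 = 0 ∧
  ∃ kr kl : StieltjesFunction ℝ,
    Continuous ⇑kr ∧ Continuous ⇑kl ∧ kr 0 = 0 ∧ kl 0 = 0 ∧
    (∀ t ∈ Icc (0:ℝ) T, k t = kr t - kl t) ∧
    (∫ t in Icc (0:ℝ) T, l t (x t) ∂kl.measure) = 0 ∧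
    (∫ t in Icc (0:ℝ) T, r t (x t) ∂kr.measure) = 0

/-- One-sided estimate for the stability of the Skorokhod reflection term. -/
theorem skorokhod_one_sided
    (T c : ℝ) (hT : 0 < T) (hc : 0 < c)
    (l₁ r₁ l₂ r₂ : ℝ → ℝ → ℝ)
    (hmr₁ : ∀ t ∈ Icc (0:ℝ) T, ∀ x y : ℝ, y ≤ x → c * (x - y) ≤ r₁ t x - r₁ t y)
    (hml₂ : ∀ t ∈ Icc (0:ℝ) T, ∀ x y : ℝ, y ≤ x → c * (x - y) ≤ l₂ t x - l₂ t y)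
    (s₁ s₂ x₁ K₁ x₂ K₂ : ℝ → ℝ)
    (h₁ : IsSkorokhodSolution T l₁ r₁ s₁ x₁ K₁)
    (h₂ : IsSkorokhodSolution T l₂ r₂ s₂ x₂ K₂)
    (Ms Ml Mr : ℝ)
    (hMs : ∀ t ∈ Icc (0:ℝ) T, |s₁ t - s₂ t| ≤ Ms)
    (hMl : ∀ t ∈ Icc (0:ℝ) T, ∀ x : ℝ, |l₁ t x - l₂ t x| ≤ Ml)
    (hMr : ∀ t ∈ Icc (0:ℝ) T, ∀ x : ℝ, |r₁ t x - r₂ t x| ≤ Mr) :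
    ∀ t ∈ Icc (0:ℝ) T, K₁ t - K₂ t ≤ Ms + (1 / c) * max Ml Mr := by
  obtain ⟨hx₁c, hK₁c, hxs₁, hcon₁, Kr₁, Kl₁, hKr₁c, hKl₁c, hKr₁0, hKl₁0, hK₁eq,
    hKl₁supp, hKr₁supp⟩ := h₁
  obtain ⟨hx₂c, hK₂c, hxs₂, hcon₂, Kr₂, Kl₂, hKr₂c, hKl₂c, hKr₂0, hKl₂0, hK₂eq,
    hKl₂supp, hKr₂supp⟩ := h₂
  have h0T : (0:ℝ) ∈ Icc (0:ℝ) T := ⟨le_refl 0, hT.le⟩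
  have hMs0 : 0 ≤ Ms := le_trans (abs_nonneg _) (hMs 0 h0T)
  have hMl0 : 0 ≤ Ml := le_trans (abs_nonneg _) (hMl 0 h0T 0)
  have hMr0 : 0 ≤ Mr := le_trans (abs_nonneg _) (hMr 0 h0T 0)
  set B' : ℝ := Ms + (1 / c) * max Ml Mr with hB'def
  have hB'0 : 0 ≤ B' :=
    add_nonneg hMs0 (mul_nonneg (by positivity) (le_trans hMl0 (le_max_left _ _)))
  set f : ℝ → ℝ := fun u => (Kr₁ u + Kl₂ u) - (Kl₁ u + Kr₂ u) with hfdef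
  have hfK : ∀ u ∈ Icc (0:ℝ) T, f u = K₁ u - K₂ u := by
    intro u hu
    simp only [hfdef, hK₁eq u hu, hK₂eq u hu]
    ring
  have hfcont : Continuous f := ((hKr₁c.add hKl₂c).sub (hKl₁c.add hKr₂c))
  have hf0 : f 0 = 0 := by simp [hfdef, hKr₁0, hKl₁0, hKr₂0, hKl₂0]
  -- the key pointwise estimate at times where the relevant measures may charge
  have key : ∀ u ∈ Icc (0:ℝ) T, (r₁ u (x₁ u) ≤ 0 ∨ 0 ≤ l₂ u (x₂ u)) → f u ≤ B' := by
    intro u hu hcase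
    have hx : x₁ u - x₂ u ≤ (1 / c) * max Ml Mr := by
      have hmax0 : 0 ≤ max Ml Mr := le_trans hMl0 (le_max_left _ _)
      rcases hcase with h | h
      · have hr10 : r₁ u (x₁ u) = 0 := le_antisymm h (hcon₁ u hu).2
        rcases le_or_gt (x₁ u) (x₂ u) with hle | hlt
        · have : 0 ≤ (1 / c) * max Ml Mr := mul_nonneg (by positivity) hmax0
          linarith
        · have hmono := hmr₁ u hu (x₁ u) (x₂ u) hlt.le
          have habs := abs_le.mp (hMr u hu (x₂ u))
          have hr2 : 0 ≤ r₂ u (x₂ u) := (hcon₂ u hu).2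
          have hcd : c * (x₁ u - x₂ u) ≤ max Ml Mr := by
            have := le_max_right Ml Mr
            linarith [habs.1, habs.2]
          calc x₁ u - x₂ u = (1 / c) * (c * (x₁ u - x₂ u)) := by field_simp
            _ ≤ (1 / c) * max Ml Mr :=
                mul_le_mul_of_nonneg_left hcd (by positivity)
      · have hl20 : l₂ u (x₂ u) = 0 := le_antisymm (hcon₂ u hu).1 h
        rcases le_or_gt (x₁ u) (x₂ u) with hle | hlt
        · have : 0 ≤ (1 / c) * max Ml Mr := mul_nonneg (by positivity) hmax0
          linarith
        · have hmono := hml₂ u hu (x₁ u) (x₂ u) hlt.le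
          have habs := abs_le.mp (hMl u hu (x₁ u))
          have hl1 : l₁ u (x₁ u) ≤ 0 := (hcon₁ u hu).1
          have hcd : c * (x₁ u - x₂ u) ≤ max Ml Mr := by
            have := le_max_left Ml Mr
            linarith [habs.1, habs.2]
          calc x₁ u - x₂ u = (1 / c) * (c * (x₁ u - x₂ u)) := by field_simp
            _ ≤ (1 / c) * max Ml Mr :=
                mul_le_mul_of_nonneg_left hcd (by positivity)
    have hs := abs_le.mp (hMs u hu)
    have h1 := hxs₁ u hu
    have h2 := hxs₂ u hu
    rw [hfK u hu]
    have : K₁ u - K₂ u = (x₁ u - x₂ u) - (s₁ u - s₂ u) := by linarith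
    rw [this, hB'def]
    linarith [hs.1]
  -- main argument
  intro t ht
  by_contra hgt
  push_neg at hgt
  have hft : B' < f t := by rw [hfK t ht]; linarith
  set S : Set ℝ := Icc 0 t ∩ {u | f u ≤ B'} with hSdef
  have hS0 : (0:ℝ) ∈ S := ⟨⟨le_refl 0, ht.1⟩, by simp [hf0, hB'0]⟩
  have hSne : S.Nonempty := ⟨0, hS0⟩
  have hSbdd : BddAbove S := ⟨t, fun u hu => hu.1.2⟩
  have hSclosed : IsClosed S :=
    isClosed_Icc.inter (isClosed_le hfcont continuous_const)
  set σ := sSup S with hσdef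
  have hσmem : σ ∈ S := hSclosed.csSup_mem hSne hSbdd
  have hσ0 : 0 ≤ σ := hσmem.1.1
  have hσt : σ ≤ t := hσmem.1.2
  have hfσ : f σ ≤ B' := hσmem.2
  have hσlt : σ < t := hσt.lt_of_ne (by intro h; rw [h] at hfσ; linarith)
  have hIoc : ∀ u ∈ Ioc σ t, u ∈ Icc (0:ℝ) T ∧ B' < f u := by
    intro u hu
    have huT : u ∈ Icc (0:ℝ) T := ⟨le_trans hσ0 hu.1.le, le_trans hu.2 ht.2⟩
    refine ⟨huT, ?_⟩
    by_contra hle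
    push_neg at hle
    have : u ∈ S := ⟨⟨le_trans hσ0 hu.1.le, hu.2⟩, hle⟩
    exact absurd (le_csSup hSbdd this) (not_le.mpr hu.1)
  have hμ1 : Kr₁.measure (Ioc σ t) = 0 := by
    refine measure_mono_null ?_ hKr₁supp
    intro u hu
    obtain ⟨huT, hfu⟩ := hIoc u hu
    refine ⟨huT, ?_⟩
    by_contra hr
    push_neg at hr
    exact absurd (key u huT (Or.inl hr)) (not_le.mpr hfu)
  have hμ2 : Kl₂.measure (Ioc σ t) = 0 := by
    refine measure_mono_null ?_ hKl₂supp
    intro u hu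
    obtain ⟨huT, hfu⟩ := hIoc u hu
    refine ⟨huT, ?_⟩
    by_contra hr
    push_neg at hr
    exact absurd (key u huT (Or.inr hr)) (not_le.mpr hfu)
  have hinc1 : Kr₁ t - Kr₁ σ ≤ 0 := by
    have := Kr₁.measure_Ioc σ t
    rw [hμ1] at this
    exact ENNReal.ofReal_eq_zero.mp this.symm
  have hinc2 : Kl₂ t - Kl₂ σ ≤ 0 := by
    have := Kl₂.measure_Ioc σ t
    rw [hμ2] at this
    exact ENNReal.ofReal_eq_zero.mp this.symm
  have hm1 : Kl₁ σ ≤ Kl₁ t := Kl₁.mono hσlt.le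
  have hm2 : Kr₂ σ ≤ Kr₂ t := Kr₂.mono hσlt.le
  have : f t ≤ f σ := by simp only [hfdef]; linarith
  linarith

/-- Continuous dependence of the reflection term of the Skorokhod problem on the
input function and the reflecting boundaries: `sup_t |K¹_t - K²_t| ≤
(C/c)·sup_t |s¹_t - s²_t| + (1/c)·max(L̄_T, R̄_T)`, stated via arbitrary upper
bounds `Ms, Ml, Mr` of the respective suprema. -/
theorem skorokhod_problem_stability
    (T c C : ℝ) (hT : 0 < T) (hc : 0 < c) (hcC : c < C)
    (l₁ r₁ l₂ r₂ : ℝ → ℝ → ℝ)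
    (hA₁ : AssumptionA T c C l₁ r₁) (hA₂ : AssumptionA T c C l₂ r₂)
    (s₁ s₂ x₁ K₁ x₂ K₂ : ℝ → ℝ)
    (hs₁ : ContinuousOn s₁ (Icc 0 T)) (hs₂ : ContinuousOn s₂ (Icc 0 T))
    (h₁ : IsSkorokhodSolution T l₁ r₁ s₁ x₁ K₁)
    (h₂ : IsSkorokhodSolution T l₂ r₂ s₂ x₂ K₂)
    (Ms Ml Mr : ℝ)
    (hMs : ∀ t ∈ Icc (0:ℝ) T, |s₁ t - s₂ t| ≤ Ms)
    (hMl : ∀ t ∈ Icc (0:ℝ) T, ∀ x : ℝ, |l₁ t x - l₂ t x| ≤ Ml)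
    (hMr : ∀ t ∈ Icc (0:ℝ) T, ∀ x : ℝ, |r₁ t x - r₂ t x| ≤ Mr) :
    ∀ t ∈ Icc (0:ℝ) T, |K₁ t - K₂ t| ≤ (C / c) * Ms + (1 / c) * max Ml Mr := by
  intro t ht
  have h0T : (0:ℝ) ∈ Icc (0:ℝ) T := ⟨le_refl 0, hT.le⟩
  have hMs0 : 0 ≤ Ms := le_trans (abs_nonneg _) (hMs 0 h0T)
  have hcC1 : (1:ℝ) ≤ C / c := (one_le_div hc).mpr hcC.le
  have hMsle : Ms ≤ (C / c) * Ms := le_mul_of_one_le_left hMs0 hcC1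
  have hmr₁ : ∀ u ∈ Icc (0:ℝ) T, ∀ x y : ℝ, y ≤ x → c * (x - y) ≤ r₁ u x - r₁ u y :=
    fun u hu x y hxy => ((hA₁.2.1 u hu x y hxy).2).1
  have hml₁ : ∀ u ∈ Icc (0:ℝ) T, ∀ x y : ℝ, y ≤ x → c * (x - y) ≤ l₁ u x - l₁ u y :=
    fun u hu x y hxy => ((hA₁.2.1 u hu x y hxy).1).1
  have hmr₂ : ∀ u ∈ Icc (0:ℝ) T, ∀ x y : ℝ, y ≤ x → c * (x - y) ≤ r₂ u x - r₂ u y :=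
    fun u hu x y hxy => ((hA₂.2.1 u hu x y hxy).2).1
  have hml₂ : ∀ u ∈ Icc (0:ℝ) T, ∀ x y : ℝ, y ≤ x → c * (x - y) ≤ l₂ u x - l₂ u y :=
    fun u hu x y hxy => ((hA₂.2.1 u hu x y hxy).1).1
  have h12 : K₁ t - K₂ t ≤ Ms + (1 / c) * max Ml Mr :=
    skorokhod_one_sided T c hT hc l₁ r₁ l₂ r₂ hmr₁ hml₂ s₁ s₂ x₁ K₁ x₂ K₂ h₁ h₂
      Ms Ml Mr hMs hMl hMr t ht
  have h21 : K₂ t - K₁ t ≤ Ms + (1 / c) * max Ml Mr :=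
    skorokhod_one_sided T c hT hc l₂ r₂ l₁ r₁ hmr₂ hml₁ s₂ s₁ x₂ K₂ x₁ K₁ h₂ h₁
      Ms Ml Mr (fun u hu => by rw [abs_sub_comm]; exact hMs u hu)
      (fun u hu x => by rw [abs_sub_comm]; exact hMl u hu x)
      (fun u hu x => by rw [abs_sub_comm]; exact hMr u hu x) t ht
  rw [abs_sub_le_iff]
  constructor <;> linarith
end
end

section
/- Let T > 0 and let l, r : [0,T] × ℝ → ℝ satisfy Assumption (A). Then for every continuous function s : [0,T] → ℝ and every a ∈ ℝ with l(T, a) ≤ 0 ≤ r(T, a), there exists a solution (x, k) of the backward Skorokhod problem BSP_l^r(s, a), and it is unique: if (x¹, k¹) and (x², k²) are both solutions of BSP_l^r(s, a), then x¹_t = x²_t and k¹_t = k²_t for all t ∈ [0,T]. -/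
open MeasureTheory Set

noncomputable section

namespace BSkor

/-- running supremum of `g` over `[p, t]`. -/
def rsup (g : ℝ → ℝ) (p t : ℝ) : ℝ := sSup (g '' Icc p t)

lemma rsup_self (g : ℝ → ℝ) (p : ℝ) : rsup g p p = g p := by
  simp [rsup]

lemma le_rsup {g : ℝ → ℝ} {p t : ℝ} (hg : ContinuousOn g (Icc p t)) {u : ℝ}
    (hu : u ∈ Icc p t) : g u ≤ rsup g p t :=
  le_csSup (isCompact_Icc.image_of_continuousOn hg).bddAbove ⟨u, hu, rfl⟩

lemma rsup_le {g : ℝ → ℝ} {p t M : ℝ} (hpt : p ≤ t) (h : ∀ u ∈ Icc p t, g u ≤ M) :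
    rsup g p t ≤ M :=
  csSup_le ((nonempty_Icc.2 hpt).image g) (by rintro _ ⟨u, hu, rfl⟩; exact h u hu)

lemma exists_rsup {g : ℝ → ℝ} {p t : ℝ} (hpt : p ≤ t) (hg : ContinuousOn g (Icc p t)) :
    ∃ v ∈ Icc p t, rsup g p t = g v := by
  obtain ⟨v, hv, hmax⟩ := isCompact_Icc.exists_isMaxOn (nonempty_Icc.2 hpt) hg
  exact ⟨v, hv, le_antisymm (rsup_le hpt fun u hu => hmax hu) (le_rsup hg hv)⟩

lemma rsup_mono {g : ℝ → ℝ} {p t t' : ℝ} (hpt : p ≤ t) (htt' : t ≤ t')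
    (hg : ContinuousOn g (Icc p t')) : rsup g p t ≤ rsup g p t' :=
  rsup_le hpt fun u hu => le_rsup hg ⟨hu.1, hu.2.trans htt'⟩

lemma continuousOn_rsup {g : ℝ → ℝ} {p q : ℝ} (hpq : p ≤ q)
    (hg : ContinuousOn g (Icc p q)) :
    ContinuousOn (fun t => rsup g p t) (Icc p q) := by
  have hu : UniformContinuousOn g (Icc p q) :=
    isCompact_Icc.uniformContinuousOn_of_continuous hg
  rw [Metric.uniformContinuousOn_iff] at hu
  rw [Metric.continuousOn_iff]
  intro t ht ε hε
  obtain ⟨δ, hδ, hδ'⟩ := hu (ε / 2) (by linarith)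
  have key : ∀ t1 ∈ Icc p q, ∀ t2 ∈ Icc p q, t1 ≤ t2 → t2 - t1 < δ →
      rsup g p t1 ≤ rsup g p t2 ∧ rsup g p t2 ≤ rsup g p t1 + ε / 2 := by
    intro t1 h1 t2 h2 h12 hdist
    constructor
    · exact rsup_mono h1.1 h12 (hg.mono (Icc_subset_Icc le_rfl h2.2))
    · refine rsup_le (h1.1.trans h12) fun u hu => ?_
      rcases le_or_gt u t1 with hle | hlt
      · exact (le_rsup (hg.mono (Icc_subset_Icc le_rfl h1.2)) ⟨hu.1, hle⟩).trans
          (by linarith)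
      · have hu' : u ∈ Icc p q := ⟨hu.1, hu.2.trans h2.2⟩
        have := hδ' u hu' t1 h1 (by rw [Real.dist_eq]; rw [abs_lt]; constructor <;> [linarith [hu.2]; linarith [hu.2]])
        have hg1 : g u - g t1 < ε / 2 := by
          have := (abs_lt.1 (by simpa [Real.dist_eq] using this)).2; linarith
        have := le_rsup (hg.mono (Icc_subset_Icc le_rfl h1.2)) ⟨h1.1, le_rfl⟩
        linarith
  refine ⟨δ, hδ, fun t' ht' hd => ?_⟩
  rw [Real.dist_eq] at hd ⊢
  rcases le_total t' t with h | h
  · obtain ⟨h1, h2⟩ := key t' ht' t ht h (by rw [abs_lt] at hd; linarith [hd.1])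
    rw [abs_lt]; constructor <;> linarith
  · obtain ⟨h1, h2⟩ := key t ht t' ht' h (by rw [abs_lt] at hd; linarith [hd.2])
    rw [abs_lt]; constructor <;> linarith

/-- the push (local time) functional: positive part of the running supremum. -/
def push (g : ℝ → ℝ) (p t : ℝ) : ℝ := max 0 (rsup g p t)

lemma push_nonneg (g : ℝ → ℝ) (p t : ℝ) : 0 ≤ push g p t := le_max_left _ _

lemma push_self {g : ℝ → ℝ} {p : ℝ} (h : g p ≤ 0) : push g p p = 0 := by
  simp [push, rsup_self, h]

lemma push_mono {g : ℝ → ℝ} {p t t' : ℝ} (hpt : p ≤ t) (htt' : t ≤ t')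
    (hg : ContinuousOn g (Icc p t')) : push g p t ≤ push g p t' :=
  max_le_max le_rfl (rsup_mono hpt htt' hg)

lemma continuousOn_push {g : ℝ → ℝ} {p q : ℝ} (hpq : p ≤ q)
    (hg : ContinuousOn g (Icc p q)) :
    ContinuousOn (fun t => push g p t) (Icc p q) :=
  continuousOn_const.sup (continuousOn_rsup hpq hg)

lemma ge_of_push {g : ℝ → ℝ} {p t : ℝ} (hg : ContinuousOn g (Icc p t)) (hpt : p ≤ t) :
    g t ≤ push g p t :=
  (le_rsup hg ⟨hpt, le_rfl⟩).trans (le_max_right _ _)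

lemma push_le {g : ℝ → ℝ} {p t M : ℝ} (hpt : p ≤ t) (hM : 0 ≤ M)
    (h : ∀ u ∈ Icc p t, g u ≤ M) : push g p t ≤ M :=
  max_le hM (rsup_le hpt h)

lemma push_support {g : ℝ → ℝ} {p q u t : ℝ} (hg : ContinuousOn g (Icc p q))
    (hpu : p ≤ u) (hut : u ≤ t) (htq : t ≤ q) (h : push g p u < push g p t) :
    ∃ v ∈ Ioc u t, g v = push g p v := by
  have hpt : p ≤ t := hpu.trans hut
  have hgt : ContinuousOn g (Icc p t) := hg.mono (Icc_subset_Icc le_rfl htq)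
  have hpos : 0 < push g p t := lt_of_le_of_lt (push_nonneg g p u) h
  have heq : push g p t = rsup g p t := by
    rcases max_cases (0:ℝ) (rsup g p t) with ⟨h1, h2⟩ | ⟨h1, h2⟩
    · exfalso; rw [push] at hpos; rw [h1] at hpos; exact lt_irrefl _ hpos
    · exact h1
  obtain ⟨v, hv, hveq⟩ := exists_rsup hpt hgt
  have hvu : u < v := by
    by_contra hvu
    push_neg at hvu
    have : rsup g p t ≤ rsup g p u :=
      hveq.trans_le (le_rsup (hg.mono (Icc_subset_Icc le_rfl (hut.trans htq))) ⟨hv.1, hvu⟩)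
    have : push g p t ≤ push g p u := by
      rw [heq]; exact this.trans (le_max_right _ _)
    linarith
  refine ⟨v, ⟨hvu, hv.2⟩, le_antisymm ?_ ?_⟩
  · exact ge_of_push (hg.mono (Icc_subset_Icc le_rfl (hv.2.trans htq))) hv.1
  · calc push g p v ≤ push g p t := push_mono hv.1 hv.2 hgt
      _ = g v := by rw [heq, hveq]

lemma glue_continuousOn {f g : ℝ → ℝ} {a p q : ℝ} (hap : a ≤ p) (hpq : p ≤ q)
    (hf : ContinuousOn f (Icc a p)) (hg : ContinuousOn g (Icc p q)) (heq : f p = g p) :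
    ContinuousOn (fun t => if t ≤ p then f t else g t) (Icc a q) := by
  set h := fun t => if t ≤ p then f t else g t with hh
  have hEf : EqOn h f (Icc a p) := fun t ht => if_pos ht.2
  have hEg : EqOn h g (Icc p q) := by
    intro t ht
    rcases lt_or_eq_of_le ht.1 with hlt | hEqp
    · exact if_neg (not_le.2 hlt)
    · simp only [hh, ← hEqp, if_pos le_rfl, heq]
  have hsub : Icc a q ⊆ Icc a p ∪ Icc p q := by rw [Icc_union_Icc_eq_Icc hap hpq]
  intro t ht
  have c1 : ContinuousWithinAt h (Icc a p) t := by
    by_cases htp : t ∈ Icc a p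
    · exact ((hf t htp).congr hEf (hEf htp))
    · exact continuousWithinAt_of_notMem_closure (by rwa [isClosed_Icc.closure_eq])
  have c2 : ContinuousWithinAt h (Icc p q) t := by
    by_cases htp : t ∈ Icc p q
    · exact ((hg t htp).congr hEg (hEg htp))
    · exact continuousWithinAt_of_notMem_closure (by rwa [isClosed_Icc.closure_eq])
  exact (c1.union c2).mono hsub

/-- Goodness predicate: `(x, φ, ψ)` solves the two-sided reflection problem for driver `y`
and barriers `α ≤ β` on the interval `[0, p]`. -/
def Good (α β y : ℝ → ℝ) (p : ℝ) (x φ ψ : ℝ → ℝ) : Prop :=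
  ContinuousOn x (Icc 0 p) ∧ ContinuousOn φ (Icc 0 p) ∧ ContinuousOn ψ (Icc 0 p) ∧
  MonotoneOn φ (Icc 0 p) ∧ MonotoneOn ψ (Icc 0 p) ∧ φ 0 = 0 ∧ ψ 0 = 0 ∧
  (∀ t ∈ Icc (0:ℝ) p, x t = y t + φ t - ψ t ∧ α t ≤ x t ∧ x t ≤ β t) ∧
  (∀ u ∈ Icc (0:ℝ) p, ∀ t ∈ Icc (0:ℝ) p, u ≤ t → φ u < φ t →
    ∃ v ∈ Ioc u t, x v = α v) ∧
  (∀ u ∈ Icc (0:ℝ) p, ∀ t ∈ Icc (0:ℝ) p, u ≤ t → ψ u < ψ t →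
    ∃ v ∈ Ioc u t, x v = β v)

lemma Good.neg {α β y : ℝ → ℝ} {p : ℝ} {x φ ψ : ℝ → ℝ}
    (h : Good α β y p x φ ψ) :
    Good (fun t => -β t) (fun t => -α t) (fun t => -y t) p
      (fun t => -x t) ψ φ := by
  obtain ⟨hx, hφ, hψ, hmφ, hmψ, h0φ, h0ψ, hrel, hsφ, hsψ⟩ := h
  refine ⟨hx.neg, hψ, hφ, hmψ, hmφ, h0ψ, h0φ, ?_, ?_, ?_⟩
  · intro t ht
    obtain ⟨h1, h2, h3⟩ := hrel t ht
    refine ⟨by dsimp only; rw [h1]; ring, by dsimp only; linarith, by dsimp only; linarith⟩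
  · intro u hu t ht hut hlt
    obtain ⟨v, hv, hveq⟩ := hsψ u hu t ht hut hlt
    exact ⟨v, hv, by dsimp only; rw [hveq]⟩
  · intro u hu t ht hut hlt
    obtain ⟨v, hv, hveq⟩ := hsφ u hu t ht hut hlt
    exact ⟨v, hv, by dsimp only; rw [hveq]⟩

lemma step_lower {εp δ p q : ℝ} {α β y x φ ψ : ℝ → ℝ}
    (hεp : 0 < εp)
    (hα : ContinuousOn α (Icc 0 q)) (hβ : ContinuousOn β (Icc 0 q))
    (hy : ContinuousOn y (Icc 0 q))
    (hsep : ∀ t ∈ Icc (0:ℝ) q, α t + εp ≤ β t)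
    (hosc : ∀ t ∈ Icc (0:ℝ) q, ∀ u ∈ Icc (0:ℝ) q, |t - u| ≤ δ →
       |α t - α u| ≤ εp/8 ∧ |β t - β u| ≤ εp/8 ∧ |y t - y u| ≤ εp/8)
    (hp : 0 ≤ p) (hpq : p ≤ q) (hqd : q - p ≤ δ)
    (hG : Good α β y p x φ ψ) (hc : x p ≤ (α p + β p)/2) :
    ∃ x' φ' ψ', Good α β y q x' φ' ψ' := by
  obtain ⟨hx, hφ, hψ, hmφ, hmψ, h0φ, h0ψ, hrel, hsφ, hsψ⟩ := hG
  have hpmem : p ∈ Icc (0:ℝ) p := ⟨hp, le_rfl⟩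
  have hpq' : Icc p q ⊆ Icc 0 q := Icc_subset_Icc hp le_rfl
  have h0p : Icc (0:ℝ) p ⊆ Icc 0 q := Icc_subset_Icc le_rfl hpq
  obtain ⟨hrelp, hcα, hcβ⟩ := hrel p hpmem
  set c := x p with hcdef
  set z : ℝ → ℝ := fun t => c + (y t - y p) with hzdef
  set g : ℝ → ℝ := fun u => α u - z u with hgdef
  have hzc : ContinuousOn z (Icc p q) :=
    continuousOn_const.add ((hy.mono hpq').sub continuousOn_const)
  have hgc : ContinuousOn g (Icc p q) := (hα.mono hpq').sub hzc
  set F : ℝ → ℝ := fun t => push g p t with hFdef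
  have hzp : z p = c := by simp [hzdef]
  have hFp : F p = 0 := by
    apply push_self; simp only [hgdef, hzp]; linarith
  have hFmono : ∀ u t : ℝ, p ≤ u → u ≤ t → t ≤ q → F u ≤ F t := fun u t h1 h2 h3 =>
    push_mono h1 h2 (hgc.mono (Icc_subset_Icc le_rfl h3))
  have hFcont : ContinuousOn F (Icc p q) := continuousOn_push hpq hgc
  have hFnn : ∀ t, 0 ≤ F t := push_nonneg g p
  have hblock : ∀ t ∈ Icc p q, ∀ u ∈ Icc p q,
      |y t - y u| ≤ εp/8 ∧ |α t - α u| ≤ εp/8 ∧ |β t - β u| ≤ εp/8 := by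
    intro t ht u hu
    have h1 := hosc t (hpq' ht) u (hpq' hu)
      (by rw [abs_le]; constructor <;> [linarith [ht.1, hu.2]; linarith [ht.2, hu.1]])
    exact ⟨h1.2.2, h1.1, h1.2.1⟩
  have hsepp : α p + εp ≤ β p := hsep p (hpq' ⟨le_rfl, hpq⟩)
  have hcβ' : c ≤ β p - εp/2 := by linarith
  -- lower/upper bounds on the block
  have hxlb : ∀ t ∈ Icc p q, α t ≤ z t + F t := by
    intro t ht
    have := ge_of_push (hgc.mono (Icc_subset_Icc le_rfl ht.2)) ht.1
    simp only [hgdef] at this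
    simp only [hFdef]; linarith
  have hxub : ∀ t ∈ Icc p q, z t + F t ≤ β t := by
    intro t ht
    have hpmem' : p ∈ Icc p q := ⟨le_rfl, hpq⟩
    obtain ⟨hyo, -, hβo⟩ := hblock t ht p hpmem'
    rcases le_or_gt (rsup g p t) 0 with h0 | h0
    · have hF0 : F t = 0 := by
        simp only [hFdef, push]; exact max_eq_left h0
      rw [hF0, add_zero]
      have h1 := (abs_le.1 hyo).2
      have h2 := (abs_le.1 hβo).1
      simp only [hzdef]; linarith
    · obtain ⟨v, hv, hveq⟩ := exists_rsup ht.1 (hgc.mono (Icc_subset_Icc le_rfl ht.2))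
      have hvq : v ∈ Icc p q := ⟨hv.1, hv.2.trans ht.2⟩
      have hFt : F t = α v - z v := by
        simp only [hFdef, push, max_eq_right h0.le]; rw [hveq]
      obtain ⟨hyv, hαv, -⟩ := hblock t ht v hvq
      have hsepv : α v + εp ≤ β v := hsep v (hpq' hvq)
      have h1 := (abs_le.1 hyv).2
      have h2 := (abs_le.1 hαv).1
      have h3 := (abs_le.1 hβo).1
      -- z t + F t = (y t - y v) + α v ≤ εp/8 + α t + εp/8 ≤ β t
      have hαt : α t + εp ≤ β t := hsep t (hpq' ht)
      have : z t + F t = (y t - y v) + α v := by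
        rw [hFt]; simp only [hzdef]; ring
      rw [this]; linarith
  -- define the extensions
  set x' : ℝ → ℝ := fun t => if t ≤ p then x t else z t + F t with hx'def
  set φ' : ℝ → ℝ := fun t => if t ≤ p then φ t else φ p + F t with hφ'def
  set ψ' : ℝ → ℝ := fun t => if t ≤ p then ψ t else ψ p with hψ'def
  have hx'eq : ∀ t, t ≤ p → x' t = x t := fun t ht => if_pos ht
  have hx'eq' : ∀ t, p < t → x' t = z t + F t := fun t ht => if_neg (not_le.2 ht)
  have hφ'eq : ∀ t, t ≤ p → φ' t = φ t := fun t ht => if_pos ht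
  have hφ'eq' : ∀ t, p < t → φ' t = φ p + F t := fun t ht => if_neg (not_le.2 ht)
  have hψ'eq : ∀ t, t ≤ p → ψ' t = ψ t := fun t ht => if_pos ht
  have hψ'eq' : ∀ t, p < t → ψ' t = ψ p := fun t ht => if_neg (not_le.2 ht)
  refine ⟨x', φ', ψ', ?_, ?_, ?_, ?_, ?_, ?_, ?_, ?_, ?_, ?_⟩
  · -- continuity of x'
    exact glue_continuousOn hp hpq hx (hzc.add hFcont) (by rw [hzp, hFp]; simp [hcdef])
  · exact glue_continuousOn hp hpq hφ (continuousOn_const.add hFcont) (by rw [hFp]; simp)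
  · exact glue_continuousOn hp hpq hψ continuousOn_const rfl
  · -- MonotoneOn φ'
    intro u hu t ht hut
    rcases le_or_gt t p with htp | htp
    · rw [hφ'eq u (hut.trans htp), hφ'eq t htp]
      exact hmφ ⟨hu.1, hut.trans htp⟩ ⟨ht.1, htp⟩ hut
    · rw [hφ'eq' t htp]
      rcases le_or_gt u p with hup | hup
      · rw [hφ'eq u hup]
        have := hmφ ⟨hu.1, hup⟩ hpmem hup
        have := hFnn t
        linarith
      · rw [hφ'eq' u hup]
        have := hFmono u t hup.le hut ht.2
        linarith
  · -- MonotoneOn ψ'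
    intro u hu t ht hut
    rcases le_or_gt t p with htp | htp
    · rw [hψ'eq u (hut.trans htp), hψ'eq t htp]
      exact hmψ ⟨hu.1, hut.trans htp⟩ ⟨ht.1, htp⟩ hut
    · rw [hψ'eq' t htp]
      rcases le_or_gt u p with hup | hup
      · rw [hψ'eq u hup]
        exact hmψ ⟨hu.1, hup⟩ hpmem hup
      · rw [hψ'eq' u hup]
  · rw [hφ'eq 0 hp]; exact h0φ
  · rw [hψ'eq 0 hp]; exact h0ψ
  · -- relation and bounds
    intro t ht
    rcases le_or_gt t p with htp | htp
    · rw [hx'eq t htp, hφ'eq t htp, hψ'eq t htp]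
      exact hrel t ⟨ht.1, htp⟩
    · rw [hx'eq' t htp, hφ'eq' t htp, hψ'eq' t htp]
      have htpq : t ∈ Icc p q := ⟨htp.le, ht.2⟩
      refine ⟨?_, hxlb t htpq, hxub t htpq⟩
      simp only [hzdef]
      have : c = y p + φ p - ψ p := hrelp
      linarith
  · -- support of φ'
    intro u hu t ht hut hlt
    rcases le_or_gt t p with htp | htp
    · rw [hφ'eq u (hut.trans htp), hφ'eq t htp] at hlt
      obtain ⟨v, hv, hveq⟩ := hsφ u ⟨hu.1, hut.trans htp⟩ t ⟨ht.1, htp⟩ hut hlt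
      exact ⟨v, hv, by rw [hx'eq v (hv.2.trans htp)]; exact hveq⟩
    · rcases le_or_gt u p with hup | hup
      · rw [hφ'eq u hup, hφ'eq' t htp] at hlt
        rcases lt_or_ge (φ u) (φ p) with hφup | hφup
        · obtain ⟨v, hv, hveq⟩ := hsφ u ⟨hu.1, hup⟩ p hpmem hup hφup
          exact ⟨v, ⟨hv.1, hv.2.trans htp.le⟩, by rw [hx'eq v hv.2]; exact hveq⟩
        · have hFt : push g p p < push g p t := by
            have h1 : push g p p = 0 := by
              have : F p = 0 := hFp
              simpa [hFdef] using this
            have h2 : 0 < F t := by linarith [hFnn t]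
            rw [h1]; simpa [hFdef] using h2
          obtain ⟨v, hv, hveq⟩ := push_support hgc le_rfl htp.le ht.2 hFt
          refine ⟨v, ⟨lt_of_le_of_lt hup hv.1, hv.2⟩, ?_⟩
          rw [hx'eq' v hv.1]
          simp only [hgdef] at hveq
          have : F v = α v - z v := by simp only [hFdef]; rw [← hveq]
          rw [this]; ring
      · rw [hφ'eq' u hup, hφ'eq' t htp] at hlt
        have hFt : push g p u < push g p t := by
          simp only [hFdef] at hlt ⊢; linarith
        obtain ⟨v, hv, hveq⟩ := push_support hgc hup.le hut ht.2 hFt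
        refine ⟨v, hv, ?_⟩
        rw [hx'eq' v (hup.trans hv.1)]
        simp only [hgdef] at hveq
        have : F v = α v - z v := by simp only [hFdef]; rw [← hveq]
        rw [this]; ring
  · -- support of ψ'
    intro u hu t ht hut hlt
    rcases le_or_gt t p with htp | htp
    · rw [hψ'eq u (hut.trans htp), hψ'eq t htp] at hlt
      obtain ⟨v, hv, hveq⟩ := hsψ u ⟨hu.1, hut.trans htp⟩ t ⟨ht.1, htp⟩ hut hlt
      exact ⟨v, hv, by rw [hx'eq v (hv.2.trans htp)]; exact hveq⟩
    · rcases le_or_gt u p with hup | hup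
      · rw [hψ'eq u hup, hψ'eq' t htp] at hlt
        obtain ⟨v, hv, hveq⟩ := hsψ u ⟨hu.1, hup⟩ p hpmem hup hlt
        exact ⟨v, ⟨hv.1, hv.2.trans htp.le⟩, by rw [hx'eq v hv.2]; exact hveq⟩
      · rw [hψ'eq' u hup, hψ'eq' t htp] at hlt
        exact absurd hlt (lt_irrefl _)
theorem forward_reflection {T εp : ℝ} (hT : 0 ≤ T) (hεp : 0 < εp)
    {α β y : ℝ → ℝ}
    (hα : ContinuousOn α (Icc 0 T)) (hβ : ContinuousOn β (Icc 0 T))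
    (hy : ContinuousOn y (Icc 0 T))
    (hsep : ∀ t ∈ Icc (0:ℝ) T, α t + εp ≤ β t)
    (h0 : α 0 ≤ y 0) (h0' : y 0 ≤ β 0) :
    ∃ x φ ψ : ℝ → ℝ, Good α β y T x φ ψ := by
  -- uniform continuity modulus
  have huc : ∀ f : ℝ → ℝ, ContinuousOn f (Icc 0 T) → ∃ δ > 0,
      ∀ t ∈ Icc (0:ℝ) T, ∀ u ∈ Icc (0:ℝ) T, |t - u| ≤ δ → |f t - f u| ≤ εp/8 := by
    intro f hf
    have := isCompact_Icc.uniformContinuousOn_of_continuous hf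
    rw [Metric.uniformContinuousOn_iff] at this
    obtain ⟨δ, hδ, hδ'⟩ := this (εp/8) (by linarith)
    refine ⟨δ/2, by linarith, fun t ht u hu hd => ?_⟩
    have := hδ' t ht u hu (by rw [Real.dist_eq]; linarith)
    rw [Real.dist_eq] at this; linarith
  obtain ⟨δ1, hδ1, hδ1'⟩ := huc α hα
  obtain ⟨δ2, hδ2, hδ2'⟩ := huc β hβ
  obtain ⟨δ3, hδ3, hδ3'⟩ := huc y hy
  set δ := min δ1 (min δ2 δ3) with hδdef
  have hδ : 0 < δ := lt_min hδ1 (lt_min hδ2 hδ3)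
  have hosc : ∀ t ∈ Icc (0:ℝ) T, ∀ u ∈ Icc (0:ℝ) T, |t - u| ≤ δ →
      |α t - α u| ≤ εp/8 ∧ |β t - β u| ≤ εp/8 ∧ |y t - y u| ≤ εp/8 := by
    intro t ht u hu hd
    exact ⟨hδ1' t ht u hu (hd.trans (min_le_left _ _)),
      hδ2' t ht u hu (hd.trans ((min_le_right _ _).trans (min_le_left _ _))),
      hδ3' t ht u hu (hd.trans ((min_le_right _ _).trans (min_le_right _ _)))⟩
  -- one step
  have step : ∀ p q : ℝ, 0 ≤ p → p ≤ q → q ≤ T → q - p ≤ δ →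
      (∃ x φ ψ, Good α β y p x φ ψ) → ∃ x φ ψ, Good α β y q x φ ψ := by
    intro p q hp hpq hqT hqd ⟨x, φ, ψ, hG⟩
    have hsub : Icc (0:ℝ) q ⊆ Icc 0 T := Icc_subset_Icc le_rfl hqT
    have hαq := hα.mono hsub
    have hβq := hβ.mono hsub
    have hyq := hy.mono hsub
    have hsepq : ∀ t ∈ Icc (0:ℝ) q, α t + εp ≤ β t := fun t ht => hsep t (hsub ht)
    have hoscq : ∀ t ∈ Icc (0:ℝ) q, ∀ u ∈ Icc (0:ℝ) q, |t - u| ≤ δ →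
        |α t - α u| ≤ εp/8 ∧ |β t - β u| ≤ εp/8 ∧ |y t - y u| ≤ εp/8 :=
      fun t ht u hu hd => hosc t (hsub ht) u (hsub hu) hd
    rcases le_or_gt (x p) ((α p + β p)/2) with hc | hc
    · exact step_lower hεp hαq hβq hyq hsepq hoscq hp hpq hqd hG hc
    · have hGneg := hG.neg
      have hcneg : (-x p) ≤ (((-β p)) + ((-α p)))/2 := by linarith
      have hres := step_lower (α := fun t => -β t) (β := fun t => -α t)
        (y := fun t => -y t) hεp hβq.neg hαq.neg hyq.neg
        (fun t ht => by have := hsepq t ht; linarith)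
        (fun t ht u hu hd => by
          obtain ⟨h1, h2, h3⟩ := hoscq t ht u hu hd
          refine ⟨?_, ?_, ?_⟩
          · rw [show -β t - -β u = -(β t - β u) by ring, abs_neg]; exact h2
          · rw [show -α t - -α u = -(α t - α u) by ring, abs_neg]; exact h1
          · rw [show -y t - -y u = -(y t - y u) by ring, abs_neg]; exact h3)
        hp hpq hqd hGneg hcneg
      obtain ⟨x', φ', ψ', hG'⟩ := hres
      have := hG'.neg
      simp only [neg_neg] at this
      exact ⟨_, _, _, this⟩
  -- induction along the grid
  have key : ∀ n : ℕ, ∃ x φ ψ, Good α β y (min ((n : ℝ) * δ) T) x φ ψ := by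
    intro n
    induction n with
    | zero =>
      have hmin0 : min ((0:ℕ) * δ : ℝ) T = 0 := by
        simp [hT]
      rw [hmin0]
      refine ⟨fun _ => y 0, fun _ => 0, fun _ => 0, ?_⟩
      refine ⟨continuousOn_const, continuousOn_const, continuousOn_const,
        monotoneOn_const, monotoneOn_const, rfl, rfl, ?_, ?_, ?_⟩
      · intro t ht
        have : t = 0 := le_antisymm ht.2 ht.1
        subst this
        exact ⟨by ring, h0, h0'⟩
      · intro u hu t ht hut hlt; exact absurd hlt (lt_irrefl _)
      · intro u hu t ht hut hlt; exact absurd hlt (lt_irrefl _)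
    | succ n ih =>
      rcases le_or_gt T ((n : ℝ) * δ) with h | h
      · have e1 : min ((n : ℝ) * δ) T = T := min_eq_right h
        have e2 : min (((n : ℕ) + 1 : ℝ) * δ) T = T := by
          apply min_eq_right
          have : (n : ℝ) * δ ≤ ((n : ℝ) + 1) * δ := by nlinarith [hδ.le]
          push_cast
          linarith
        rw [e1] at ih
        push_cast
        rw [e2]
        exact ih
      · set p := (n : ℝ) * δ with hpdef
        have hp0 : 0 ≤ p := by positivity
        have e1 : min p T = p := min_eq_left h.le
        rw [e1] at ih
        set q := min (((n : ℝ) + 1) * δ) T with hqdef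
        have hpq : p ≤ q := by
          apply le_min _ h.le
          nlinarith [hδ.le]
        have hqT : q ≤ T := min_le_right _ _
        have hqd : q - p ≤ δ := by
          have : q ≤ ((n : ℝ) + 1) * δ := min_le_left _ _
          nlinarith
        have := step p q hp0 hpq hqT hqd ih
        push_cast
        exact this
  obtain ⟨n, hn⟩ := exists_nat_ge (T / δ)
  have : min ((n : ℝ) * δ) T = T := by
    apply min_eq_right
    rw [div_le_iff₀ hδ] at hn
    linarith
  have hkn := key n
  rwa [this] at hkn
lemma stieltjes_const_of_null {κ : StieltjesFunction ℝ} (hκ : Continuous ⇑κ) {u t : ℝ}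
    (hut : u ≤ t) (h : κ.measure (Ioo u t) = 0) : κ t = κ u := by
  rcases eq_or_lt_of_le hut with rfl | hlt
  · rfl
  refine le_antisymm ?_ (κ.mono hut)
  by_contra hgt
  push_neg at hgt
  set η := (κ t - κ u) / 2 with hη
  have hηpos : 0 < η := by simp only [hη]; linarith
  have hcont := Metric.continuous_iff.1 hκ t η hηpos
  obtain ⟨δ, hδ, hδ'⟩ := hcont
  set t' := max u (t - δ/2) with ht'
  have ht'u : u ≤ t' := le_max_left _ _
  have ht'lt : t' < t := by
    apply max_lt hlt; linarith
  have hd : dist t' t < δ := by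
    rw [Real.dist_eq, abs_lt]
    constructor
    · have : t - δ/2 ≤ t' := le_max_right _ _
      linarith
    · linarith
  have h1 : |κ t' - κ t| < η := by
    have := hδ' t' hd; rwa [Real.dist_eq] at this
  have h2 : κ t' ≤ κ u := by
    have hsub : Ioc u t' ⊆ Ioo u t := Ioc_subset_Ioo_right ht'lt
    have := measure_mono_null hsub h
    rw [StieltjesFunction.measure_Ioc] at this
    rw [ENNReal.ofReal_eq_zero] at this
    linarith
  have := (abs_lt.1 h1).1
  simp only [hη] at this hηpos
  linarith

lemma flat_of_integral_zero {T : ℝ} {κ : StieltjesFunction ℝ} (hκ : Continuous ⇑κ)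
    {f : ℝ → ℝ} (hf : ContinuousOn f (Icc 0 T))
    (hnn : ∀ v ∈ Icc (0:ℝ) T, 0 ≤ f v)
    (hint : ∫ v in Icc (0:ℝ) T, f v ∂κ.measure = 0)
    {u t : ℝ} (hu : 0 ≤ u) (hut : u ≤ t) (htT : t ≤ T)
    (hpos : ∀ v ∈ Ioo u t, 0 < f v) : κ t = κ u := by
  have hInt : MeasureTheory.IntegrableOn f (Icc 0 T) κ.measure :=
    hf.integrableOn_compact isCompact_Icc
  have hae : (0 : ℝ → ℝ) ≤ᵐ[κ.measure.restrict (Icc 0 T)] f :=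
    MeasureTheory.ae_restrict_of_forall_mem measurableSet_Icc hnn
  have hzero : f =ᵐ[κ.measure.restrict (Icc 0 T)] 0 :=
    (MeasureTheory.integral_eq_zero_iff_of_nonneg_ae hae hInt).1 hint
  have hnull : κ.measure.restrict (Icc 0 T) {v | f v ≠ 0} = 0 := by
    have := hzero
    rw [Filter.EventuallyEq, MeasureTheory.ae_iff] at this
    simpa using this
  apply stieltjes_const_of_null hκ hut
  have hsub : Ioo u t ⊆ {v | f v ≠ 0} := fun v hv => ne_of_gt (hpos v hv)
  have h1 : κ.measure (Ioo u t) = κ.measure.restrict (Icc 0 T) (Ioo u t) := by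
    rw [MeasureTheory.Measure.restrict_apply' measurableSet_Icc]
    congr 1
    have hsub3 : Ioo u t ⊆ Icc (0:ℝ) T := fun v hv => ⟨hu.trans hv.1.le, hv.2.le.trans htT⟩
    exact (inter_eq_left.2 hsub3).symm
  rw [h1]
  exact measure_mono_null hsub hnull

lemma stieltjes_integral_zero_of_touch {T : ℝ} (hT : 0 ≤ T) (κ : StieltjesFunction ℝ)
    (hκ : Continuous ⇑κ) (hκ0 : ∀ t ≤ (0:ℝ), κ t = κ 0)
    {f : ℝ → ℝ} (hf : ContinuousOn f (Icc 0 T)) (hfs : ∀ t ∈ Icc (0:ℝ) T, f t ≤ 0)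
    (hsupp : ∀ u t : ℝ, 0 ≤ u → u ≤ t → t ≤ T → κ u < κ t → ∃ v ∈ Ico u t, f v = 0) :
    ∫ t in Icc (0:ℝ) T, f t ∂κ.measure = 0 := by
  have claim1 : ∀ δ : ℝ, 0 < δ → κ.measure {t ∈ Icc (0:ℝ) T | f t ≤ -δ} = 0 := by
    intro δ hδ
    set S := {t ∈ Icc (0:ℝ) T | f t ≤ -δ} with hS
    have hSsub : S ⊆ Icc 0 T := fun t ht => ht.1
    have hSclosed : IsClosed S := by
      have : S = Icc 0 T ∩ f ⁻¹' Iic (-δ) := by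
        ext t; simp [hS, and_comm]
      rw [this]
      exact hf.preimage_isClosed_of_isClosed isClosed_Icc isClosed_Iic
    have hScomp : IsCompact S := isCompact_Icc.of_isClosed_subset hSclosed hSsub
    have hcov : ∀ v ∈ S, ∃ η : ℝ, 0 < η ∧
        κ.measure (Ioo (v - η) (v + η) ∩ Icc 0 T) = 0 := by
      intro v hv
      have hvI : v ∈ Icc (0:ℝ) T := hSsub hv
      have hcw : ContinuousWithinAt f (Icc 0 T) v := hf v hvI
      rw [Metric.continuousWithinAt_iff] at hcw
      obtain ⟨η0, hη0, hη0'⟩ := hcw δ hδ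
      refine ⟨η0 / 2, by linarith, ?_⟩
      set a'' := v - η0/2 with ha''
      set b' := min T (v + η0/2) with hb'
      have hsub2 : Ioo (v - η0/2) (v + η0/2) ∩ Icc 0 T ⊆ Ioc a'' b' := by
        intro w hw
        exact ⟨hw.1.1, le_min hw.2.2 hw.1.2.le⟩
      set a' := max 0 a'' with ha'
      have ha'b' : a' ≤ b' := by
        rw [ha', hb', ha'']
        have h1 : 0 ≤ v := hvI.1
        have h2 : v ≤ T := hvI.2
        apply max_le
        · exact le_min hT (by linarith)
        · exact le_min (by linarith) (by linarith)
      have hκflat : κ b' = κ a' := by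
        rcases lt_or_ge (κ a') (κ b') with hlt | hle
        · exfalso
          obtain ⟨w, hw, hfw⟩ := hsupp a' b' (le_max_left _ _) ha'b' (min_le_left _ _) hlt
          have hwI : w ∈ Icc (0:ℝ) T := ⟨(le_max_left _ _).trans hw.1, hw.2.le.trans (min_le_left _ _)⟩
          have hwd : dist w v < η0 := by
            rw [Real.dist_eq, abs_lt]
            have h1 : a'' ≤ w := (le_max_right _ _).trans hw.1
            have h2 : w < v + η0/2 := lt_of_lt_of_le hw.2 (min_le_right _ _)
            constructor <;> [skip; skip]
            · simp only [ha''] at h1; linarith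
            · linarith
          have := hη0' hwI hwd
          rw [Real.dist_eq] at this
          have hfv : f v ≤ -δ := hv.2
          have : |f w - f v| < δ := this
          have := (abs_lt.1 this).2
          rw [hfw] at this
          linarith
        · exact le_antisymm hle (κ.mono ha'b')
      have hκa : κ a'' = κ a' := by
        rcases le_total a'' 0 with h0 | h0
        · rw [hκ0 a'' h0]
          rcases max_cases (0:ℝ) a'' with ⟨he, _⟩ | ⟨he, hlt⟩
          · rw [ha', he]
          · rw [ha', he, hκ0 a'' h0]
        · have : a' = a'' := max_eq_right h0
          rw [this]
      apply measure_mono_null hsub2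
      rw [StieltjesFunction.measure_Ioc, hκflat, ← hκa, sub_self, ENNReal.ofReal_zero]
    choose η hη hημ using hcov
    obtain ⟨Fin, hFin⟩ := hScomp.elim_finite_subcover
      (fun i : S => Ioo ((i : ℝ) - η i i.2) ((i : ℝ) + η i i.2))
      (fun i => isOpen_Ioo)
      (by
        intro v hv
        exact mem_iUnion.2 ⟨⟨v, hv⟩, by
          have := hη v hv
          constructor <;> dsimp <;> linarith⟩)
    have hSsub2 : S ⊆ ⋃ i ∈ Fin, (Ioo ((i : ℝ) - η i i.2) ((i : ℝ) + η i i.2) ∩ Icc 0 T) := by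
      intro v hv
      obtain ⟨i, hi, hvi⟩ := mem_iUnion₂.1 (hFin hv)
      exact mem_iUnion₂.2 ⟨i, hi, hvi, hSsub hv⟩
    refine measure_mono_null hSsub2 (le_antisymm ?_ zero_le)
    calc κ.measure (⋃ i ∈ Fin, (Ioo ((i : ℝ) - η i i.2) ((i : ℝ) + η i i.2) ∩ Icc 0 T))
        ≤ ∑ i ∈ Fin, κ.measure (Ioo ((i : ℝ) - η i i.2) ((i : ℝ) + η i i.2) ∩ Icc 0 T) :=
          measure_biUnion_finset_le _ _
      _ = 0 := by
          apply Finset.sum_eq_zero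
          intro i _
          exact hημ i i.2
  -- the set where f ≠ 0 in Icc is null
  have hnull : κ.measure.restrict (Icc 0 T) {v | f v ≠ 0} = 0 := by
    rw [MeasureTheory.Measure.restrict_apply' measurableSet_Icc]
    have hsub : {v | f v ≠ 0} ∩ Icc 0 T ⊆ ⋃ n : ℕ, {t ∈ Icc (0:ℝ) T | f t ≤ -(1/(n+1))} := by
      intro v hv
      have hvlt : f v < 0 := lt_of_le_of_ne (hfs v hv.2) hv.1
      obtain ⟨n, hn⟩ := exists_nat_one_div_lt (show (0:ℝ) < -f v by linarith)
      exact mem_iUnion.2 ⟨n, hv.2, by push_cast; push_cast at hn; linarith⟩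
    apply measure_mono_null hsub
    apply MeasureTheory.measure_iUnion_null
    intro n
    apply claim1
    positivity
  have hzero : f =ᵐ[κ.measure.restrict (Icc 0 T)] 0 := by
    rw [Filter.EventuallyEq, MeasureTheory.ae_iff]
    simpa using hnull
  have : ∫ t in Icc (0:ℝ) T, f t ∂κ.measure = ∫ t in Icc (0:ℝ) T, (0:ℝ) ∂κ.measure :=
    MeasureTheory.integral_congr_ae hzero
  rw [this]
  simp
lemma lipschitz_abs {c : ℝ} {f : ℝ → ℝ}
    (hlow : ∀ x y : ℝ, y ≤ x → c * (x - y) ≤ f x - f y) (x y : ℝ) :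
    c * |x - y| ≤ |f x - f y| := by
  rcases le_total y x with h | h
  · have h1 := hlow x y h
    have h2 : f x - f y ≤ |f x - f y| := le_abs_self _
    rw [abs_of_nonneg (by linarith : (0:ℝ) ≤ x - y)]
    linarith
  · have h1 := hlow y x h
    have h2 : f y - f x ≤ |f x - f y| := by
      rw [abs_sub_comm]; exact le_abs_self _
    rw [abs_of_nonpos (by linarith : x - y ≤ 0)]
    linarith

lemma lipschitz_abs_up {c C : ℝ} (hc : 0 ≤ c) {f : ℝ → ℝ}
    (hlow : ∀ x y : ℝ, y ≤ x → c * (x - y) ≤ f x - f y)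
    (hup : ∀ x y : ℝ, y ≤ x → f x - f y ≤ C * (x - y)) (x y : ℝ) :
    |f x - f y| ≤ C * |x - y| := by
  rcases le_total y x with h | h
  · have h1 := hlow x y h
    have h2 := hup x y h
    rw [abs_of_nonneg (by nlinarith : (0:ℝ) ≤ f x - f y),
      abs_of_nonneg (by linarith : (0:ℝ) ≤ x - y)]
    linarith
  · have h1 := hlow y x h
    have h2 := hup y x h
    rw [abs_sub_comm, abs_of_nonneg (by nlinarith : (0:ℝ) ≤ f y - f x),
      abs_sub_comm x y, abs_of_nonneg (by linarith : (0:ℝ) ≤ y - x)]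
    linarith

lemma exists_zero_iff {c C : ℝ} (hc : 0 < c) (hC : 0 < C) {f : ℝ → ℝ}
    (hlow : ∀ x y : ℝ, y ≤ x → c * (x - y) ≤ f x - f y)
    (hup : ∀ x y : ℝ, y ≤ x → f x - f y ≤ C * (x - y)) :
    ∃ L : ℝ, f L = 0 ∧ ∀ x : ℝ, (f x ≤ 0 ↔ x ≤ L) ∧ (0 ≤ f x ↔ L ≤ x) := by
  have hcont : Continuous f := by
    have : LipschitzWith (Real.toNNReal C) f := by
      apply LipschitzWith.of_dist_le_mul
      intro x y
      rw [Real.dist_eq, Real.dist_eq, Real.coe_toNNReal C hC.le]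
      exact lipschitz_abs_up hc.le hlow hup x y
    exact this.continuous
  set b := f 0 with hb
  set hi := |b| / c + 1 with hhi
  have hhi0 : 0 ≤ hi := by positivity
  have hflo : f (-hi) < 0 := by
    have := hlow 0 (-hi) (by linarith)
    have hab : b ≤ |b| := le_abs_self _
    have : c * hi ≤ b - f (-hi) := by
      rw [show (0:ℝ) - -hi = hi by ring] at this
      exact this
    have hch : c * hi = |b| + c := by
      rw [hhi]; field_simp
    nlinarith
  have hfhi : 0 < f hi := by
    have := hlow hi 0 (by linarith)
    have hab : -b ≤ |b| := neg_le_abs _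
    have hch : c * (hi - 0) = |b| + c := by
      rw [hhi]; field_simp; ring
    nlinarith
  obtain ⟨L, hL, hfL⟩ := intermediate_value_Icc (by linarith : -hi ≤ hi)
    hcont.continuousOn (show (0:ℝ) ∈ Icc (f (-hi)) (f hi) from ⟨hflo.le, hfhi.le⟩)
  refine ⟨L, hfL, fun x => ⟨⟨?_, ?_⟩, ⟨?_, ?_⟩⟩⟩
  · intro hx
    by_contra hgt
    push_neg at hgt
    have := hlow x L hgt.le
    rw [hfL] at this
    nlinarith
  · intro hx
    have := hlow L x hx
    rw [hfL] at this
    nlinarith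
  · intro hx
    by_contra hgt
    push_neg at hgt
    have := hlow L x hgt.le
    rw [hfL] at this
    nlinarith
  · intro hx
    have := hlow x L hx
    rw [hfL] at this
    nlinarith

lemma barrier_continuousOn {T c : ℝ} (hc : 0 < c) {l : ℝ → ℝ → ℝ} {Lb : ℝ → ℝ}
    (hA1 : ∀ x : ℝ, ContinuousOn (fun t => l t x) (Icc 0 T))
    (hlow : ∀ t ∈ Icc (0:ℝ) T, ∀ x y : ℝ, y ≤ x → c * (x - y) ≤ l t x - l t y)
    (hzero : ∀ t ∈ Icc (0:ℝ) T, l t (Lb t) = 0) :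
    ContinuousOn Lb (Icc 0 T) := by
  rw [Metric.continuousOn_iff]
  intro t0 ht0 ε hε
  have h1 := (hA1 (Lb t0)) t0 ht0
  rw [Metric.continuousWithinAt_iff] at h1
  obtain ⟨δ, hδ, hδ'⟩ := h1 (c * ε) (by positivity)
  refine ⟨δ, hδ, fun t ht hd => ?_⟩
  have h2 := hδ' ht hd
  have h3 : c * |Lb t - Lb t0| ≤ |l t (Lb t) - l t (Lb t0)| :=
    lipschitz_abs (fun x y hxy => hlow t ht x y hxy) _ _
  rw [hzero t ht, zero_sub, abs_neg] at h3
  rw [Real.dist_eq, hzero t0 ht0, sub_zero] at h2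
  rw [Real.dist_eq]
  have : c * |Lb t - Lb t0| < c * ε := h3.trans_lt h2
  exact (mul_lt_mul_iff_right₀ hc).1 this

lemma comp_continuousOn {T c C : ℝ} (hc : 0 < c) (hC : 0 < C) {l : ℝ → ℝ → ℝ}
    (hA1 : ∀ x : ℝ, ContinuousOn (fun t => l t x) (Icc 0 T))
    (hb : ∀ t ∈ Icc (0:ℝ) T, ∀ x y : ℝ, y ≤ x →
       c * (x - y) ≤ l t x - l t y ∧ l t x - l t y ≤ C * (x - y))
    {x : ℝ → ℝ} (hx : ContinuousOn x (Icc 0 T)) :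
    ContinuousOn (fun t => l t (x t)) (Icc 0 T) := by
  rw [Metric.continuousOn_iff]
  intro t0 ht0 ε hε
  have h1 := (hA1 (x t0)) t0 ht0
  rw [Metric.continuousWithinAt_iff] at h1
  obtain ⟨δ2, hδ2, hδ2'⟩ := h1 (ε/2) (by linarith)
  have h2 := hx t0 ht0
  rw [Metric.continuousWithinAt_iff] at h2
  obtain ⟨δ1, hδ1, hδ1'⟩ := h2 (ε/(2*C)) (by positivity)
  refine ⟨min δ1 δ2, lt_min hδ1 hδ2, fun t ht hd => ?_⟩
  have hd1 : dist t t0 < δ1 := hd.trans_le (min_le_left _ _)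
  have hd2 : dist t t0 < δ2 := hd.trans_le (min_le_right _ _)
  have e1 := hδ1' ht hd1
  have e2 := hδ2' ht hd2
  rw [Real.dist_eq] at e1 e2 ⊢
  have e3 : |l t (x t) - l t (x t0)| ≤ C * |x t - x t0| :=
    lipschitz_abs_up hc.le (fun a b hab => (hb t ht a b hab).1)
      (fun a b hab => (hb t ht a b hab).2) _ _
  have e4 : C * |x t - x t0| < C * (ε/(2*C)) := by
    apply mul_lt_mul_of_pos_left e1 hC
  have e5 : C * (ε/(2*C)) = ε/2 := by field_simp
  calc |l t (x t) - l t0 (x t0)|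
      ≤ |l t (x t) - l t (x t0)| + |l t (x t0) - l t0 (x t0)| := by
        have := abs_sub_le (l t (x t)) (l t (x t0)) (l t0 (x t0)); linarith
    _ < ε := by rw [e5] at e4; linarith

end BSkor

set_option maxHeartbeats 3000000 in
/-- Existence and uniqueness of the solution to the backward Skorokhod problem
`BSP_l^r(s, a)` under Assumption (A), for any terminal point `a` with
`l(T,a) ≤ 0 ≤ r(T,a)`. -/
theorem backward_skorokhod_problem_existence_uniqueness
    (T c C : ℝ) (hT : 0 < T) (hc : 0 < c) (hcC : c < C)
    (l r : ℝ → ℝ → ℝ) (hA : AssumptionA T c C l r)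
    (s : ℝ → ℝ) (hs : ContinuousOn s (Icc 0 T))
    (a : ℝ) (hla : l T a ≤ 0) (hra : 0 ≤ r T a) :
    (∃ x k : ℝ → ℝ, IsBackwardSkorokhodSolution T l r s a x k) ∧
    (∀ x₁ k₁ x₂ k₂ : ℝ → ℝ,
      IsBackwardSkorokhodSolution T l r s a x₁ k₁ →
      IsBackwardSkorokhodSolution T l r s a x₂ k₂ →
      ∀ t ∈ Icc (0:ℝ) T, x₁ t = x₂ t ∧ k₁ t = k₂ t) := by
  classical
  obtain ⟨hA1, hA2, ε, hε, hεsep⟩ := hA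
  have hC : 0 < C := hc.trans hcC
  have hT0 : (0:ℝ) ≤ T := hT.le
  have hTmem : T ∈ Icc (0:ℝ) T := ⟨hT0, le_rfl⟩
  have h0mem : (0:ℝ) ∈ Icc (0:ℝ) T := ⟨le_rfl, hT0⟩
  -- barrier functions
  have hLex : ∀ t : ℝ, ∃ L : ℝ, t ∈ Icc (0:ℝ) T →
      (l t L = 0 ∧ ∀ x : ℝ, (l t x ≤ 0 ↔ x ≤ L) ∧ (0 ≤ l t x ↔ L ≤ x)) := by
    intro t
    by_cases ht : t ∈ Icc (0:ℝ) T
    · obtain ⟨L, hL⟩ := BSkor.exists_zero_iff hc hC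
        (fun x y hxy => ((hA2 t ht x y hxy).1).1)
        (fun x y hxy => ((hA2 t ht x y hxy).1).2)
      exact ⟨L, fun _ => hL⟩
    · exact ⟨0, fun h => absurd h ht⟩
  choose Lb hLb using hLex
  have hRex : ∀ t : ℝ, ∃ R : ℝ, t ∈ Icc (0:ℝ) T →
      (r t R = 0 ∧ ∀ x : ℝ, (r t x ≤ 0 ↔ x ≤ R) ∧ (0 ≤ r t x ↔ R ≤ x)) := by
    intro t
    by_cases ht : t ∈ Icc (0:ℝ) T
    · obtain ⟨R, hR⟩ := BSkor.exists_zero_iff hc hC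
        (fun x y hxy => ((hA2 t ht x y hxy).2).1)
        (fun x y hxy => ((hA2 t ht x y hxy).2).2)
      exact ⟨R, fun _ => hR⟩
    · exact ⟨0, fun h => absurd h ht⟩
  choose Rb hRb using hRex
  have hLzero : ∀ t ∈ Icc (0:ℝ) T, l t (Lb t) = 0 := fun t ht => (hLb t ht).1
  have hRzero : ∀ t ∈ Icc (0:ℝ) T, r t (Rb t) = 0 := fun t ht => (hRb t ht).1
  have hLiff : ∀ t ∈ Icc (0:ℝ) T, ∀ x : ℝ, l t x ≤ 0 ↔ x ≤ Lb t :=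
    fun t ht x => ((hLb t ht).2 x).1
  have hRiff2 : ∀ t ∈ Icc (0:ℝ) T, ∀ x : ℝ, 0 ≤ r t x ↔ Rb t ≤ x :=
    fun t ht x => ((hRb t ht).2 x).2
  have hLcont : ContinuousOn Lb (Icc 0 T) :=
    BSkor.barrier_continuousOn hc (fun x => (hA1 x).1)
      (fun t ht x y h => (hA2 t ht x y h).1.1) hLzero
  have hRcont : ContinuousOn Rb (Icc 0 T) :=
    BSkor.barrier_continuousOn hc (fun x => (hA1 x).2)
      (fun t ht x y h => (hA2 t ht x y h).2.1) hRzero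
  have hsepLR : ∀ t ∈ Icc (0:ℝ) T, Rb t + ε / C ≤ Lb t := by
    intro t ht
    have h1 : ε ≤ r t (Lb t) - l t (Lb t) := hεsep t ht (Lb t)
    rw [hLzero t ht, sub_zero] at h1
    have h2 : Rb t ≤ Lb t := (hRiff2 t ht (Lb t)).1 (by linarith)
    have h3 := (hA2 t ht (Lb t) (Rb t) h2).2.2
    rw [hRzero t ht] at h3
    have h4 : ε / C ≤ Lb t - Rb t := by
      rw [div_le_iff₀ hC]
      nlinarith
    linarith
  -- driver and reversed data
  set y : ℝ → ℝ := fun t => a + s T - s t with hydef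
  have hycont : ContinuousOn y (Icc 0 T) := continuousOn_const.sub hs
  set yh : ℝ → ℝ := fun τ => y (T - τ) with hyhdef
  set αh : ℝ → ℝ := fun τ => Rb (T - τ) with hαhdef
  set βh : ℝ → ℝ := fun τ => Lb (T - τ) with hβhdef
  have hrevc : Continuous (fun τ : ℝ => T - τ) := continuous_const.sub continuous_id
  have hrevmap : MapsTo (fun τ : ℝ => T - τ) (Icc 0 T) (Icc 0 T) := by
    intro τ hτ
    rw [mem_Icc]
    constructor
    · show (0:ℝ) ≤ T - τ
      linarith [hτ.2]
    · show T - τ ≤ T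
      linarith [hτ.1]
  have hyhc : ContinuousOn yh (Icc 0 T) := hycont.comp hrevc.continuousOn hrevmap
  have hαhc : ContinuousOn αh (Icc 0 T) := hRcont.comp hrevc.continuousOn hrevmap
  have hβhc : ContinuousOn βh (Icc 0 T) := hLcont.comp hrevc.continuousOn hrevmap
  have hsep' : ∀ τ ∈ Icc (0:ℝ) T, αh τ + ε / C ≤ βh τ :=
    fun τ hτ => hsepLR (T - τ) (hrevmap hτ)
  have hyT : y T = a := by simp [hydef]
  have hstart1 : αh 0 ≤ yh 0 := by
    show Rb (T - 0) ≤ y (T - 0)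
    rw [sub_zero, hyT]
    exact (hRiff2 T hTmem a).1 hra
  have hstart2 : yh 0 ≤ βh 0 := by
    show y (T - 0) ≤ Lb (T - 0)
    rw [sub_zero, hyT]
    exact (hLiff T hTmem a).1 hla
  obtain ⟨xh, φh, ψh, hG⟩ := BSkor.forward_reflection hT0
    (show (0:ℝ) < ε / C by positivity) hαhc hβhc hyhc hsep' hstart1 hstart2
  obtain ⟨hGxc, hGφc, hGψc, hGφm, hGψm, hGφ0, hGψ0, hGrel, hGsφ, hGsψ⟩ := hG
  -- clamp function
  set clamp : ℝ → ℝ := fun t => max 0 (min t T) with hclampdef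
  have hclamp_mem : ∀ t : ℝ, T - clamp t ∈ Icc (0:ℝ) T := by
    intro t
    constructor
    · have : clamp t ≤ T := max_le hT0 (min_le_right _ _)
      linarith
    · have : (0:ℝ) ≤ clamp t := le_max_left _ _
      linarith
  have hclamp_mono : Monotone clamp := fun u t hut =>
    max_le_max le_rfl (min_le_min hut le_rfl)
  have hclamp_eq : ∀ t ∈ Icc (0:ℝ) T, clamp t = t := by
    intro t ht
    simp only [hclampdef]
    rw [min_eq_left ht.2, max_eq_right ht.1]
  have hclamp_nonpos : ∀ t : ℝ, t ≤ 0 → clamp t = 0 := by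
    intro t ht
    simp only [hclampdef]
    rw [max_eq_left ((min_le_left t T).trans ht)]
  have hclampc : Continuous clamp :=
    continuous_const.max (continuous_id.min continuous_const)
  have hinnerc : Continuous (fun t : ℝ => T - clamp t) := continuous_const.sub hclampc
  -- Stieltjes functions
  have hkr_mono : Monotone (fun t => φh T - φh (T - clamp t)) := by
    intro u t hut
    show φh T - φh (T - clamp u) ≤ φh T - φh (T - clamp t)
    have h1 := hclamp_mono hut
    have := hGφm (hclamp_mem t) (hclamp_mem u) (by linarith)
    linarith
  have hkl_mono : Monotone (fun t => ψh T - ψh (T - clamp t)) := by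
    intro u t hut
    show ψh T - ψh (T - clamp u) ≤ ψh T - ψh (T - clamp t)
    have h1 := hclamp_mono hut
    have := hGψm (hclamp_mem t) (hclamp_mem u) (by linarith)
    linarith
  have hkrfc : Continuous (fun t => φh T - φh (T - clamp t)) :=
    continuous_const.sub (hGφc.comp_continuous hinnerc hclamp_mem)
  have hklfc : Continuous (fun t => ψh T - ψh (T - clamp t)) :=
    continuous_const.sub (hGψc.comp_continuous hinnerc hclamp_mem)
  obtain ⟨kr, hkrfun⟩ : ∃ kr : StieltjesFunction ℝ,
      ∀ t : ℝ, kr t = φh T - φh (T - clamp t) :=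
    ⟨⟨fun t => φh T - φh (T - clamp t), hkr_mono, fun _ => hkrfc.continuousWithinAt⟩,
      fun _ => rfl⟩
  obtain ⟨kl, hklfun⟩ : ∃ kl : StieltjesFunction ℝ,
      ∀ t : ℝ, kl t = ψh T - ψh (T - clamp t) :=
    ⟨⟨fun t => ψh T - ψh (T - clamp t), hkl_mono, fun _ => hklfc.continuousWithinAt⟩,
      fun _ => rfl⟩
  have hkrcoe : ⇑kr = fun t => φh T - φh (T - clamp t) := funext hkrfun
  have hklcoe : ⇑kl = fun t => ψh T - ψh (T - clamp t) := funext hklfun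
  have hkrc : Continuous ⇑kr := by rw [hkrcoe]; exact hkrfc
  have hklc : Continuous ⇑kl := by rw [hklcoe]; exact hklfc
  have hkr_eval : ∀ t ∈ Icc (0:ℝ) T, kr t = φh T - φh (T - t) := by
    intro t ht
    rw [hkrfun t, hclamp_eq t ht]
  have hkl_eval : ∀ t ∈ Icc (0:ℝ) T, kl t = ψh T - ψh (T - t) := by
    intro t ht
    rw [hklfun t, hclamp_eq t ht]
  have hkr0 : kr 0 = 0 := by
    rw [hkr_eval 0 h0mem, sub_zero, sub_self]
  have hkl0 : kl 0 = 0 := by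
    rw [hkl_eval 0 h0mem, sub_zero, sub_self]
  set x : ℝ → ℝ := fun t => xh (T - t) with hxdef
  set k : ℝ → ℝ := fun t => kr t - kl t with hkdef
  have hxcont : ContinuousOn x (Icc 0 T) := hGxc.comp hrevc.continuousOn hrevmap
  have hkcont : ContinuousOn k (Icc 0 T) := (hkrc.sub hklc).continuousOn
  have hxrel : ∀ t ∈ Icc (0:ℝ) T, x t = y t + (φh (T - t) - ψh (T - t)) := by
    intro t ht
    have hmem := hrevmap ht
    obtain ⟨h1, -, -⟩ := hGrel (T - t) hmem
    show xh (T - t) = _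
    rw [h1]
    have e : T - (T - t) = t := by ring
    simp only [hyhdef]
    rw [e]
    ring
  have hbar : ∀ t ∈ Icc (0:ℝ) T, Rb t ≤ x t ∧ x t ≤ Lb t := by
    intro t ht
    have hmem := hrevmap ht
    obtain ⟨-, h2, h3⟩ := hGrel (T - t) hmem
    have e : T - (T - t) = t := by ring
    simp only [hαhdef, hβhdef] at h2 h3
    rw [e] at h2 h3
    exact ⟨h2, h3⟩
  have hkT : ∀ t ∈ Icc (0:ℝ) T, k T - k t = φh (T - t) - ψh (T - t) := by
    intro t ht
    simp only [hkdef]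
    rw [hkr_eval T hTmem, hkl_eval T hTmem, hkr_eval t ht, hkl_eval t ht,
      sub_self, hGφ0, hGψ0]
    ring
  have hxk : ∀ t ∈ Icc (0:ℝ) T, x t = a + s T - s t + (k T - k t) := by
    intro t ht
    rw [hxrel t ht, hkT t ht]
  have hconstraints : ∀ t ∈ Icc (0:ℝ) T, l t (x t) ≤ 0 ∧ 0 ≤ r t (x t) := by
    intro t ht
    obtain ⟨h1, h2⟩ := hbar t ht
    exact ⟨(hLiff t ht (x t)).2 h2, (hRiff2 t ht (x t)).2 h1⟩
  -- integral conditions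
  have hintl : (∫ t in Icc (0:ℝ) T, l t (x t) ∂kl.measure) = 0 := by
    apply BSkor.stieltjes_integral_zero_of_touch hT0 kl hklc
    · intro t ht
      rw [hklfun t, hklfun 0, hclamp_nonpos t ht, hclamp_nonpos 0 le_rfl]
    · exact BSkor.comp_continuousOn hc hC (fun xx => (hA1 xx).1)
        (fun t ht xx yy h => (hA2 t ht xx yy h).1) hxcont
    · exact fun t ht => (hconstraints t ht).1
    · intro u t hu hut htT hlt
      have humem : u ∈ Icc (0:ℝ) T := ⟨hu, hut.trans htT⟩
      have htmem : t ∈ Icc (0:ℝ) T := ⟨hu.trans hut, htT⟩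
      rw [hkl_eval u humem, hkl_eval t htmem] at hlt
      have hψlt : ψh (T - t) < ψh (T - u) := by linarith
      obtain ⟨v, hv, hveq⟩ := hGsψ (T - t) (hrevmap htmem) (T - u) (hrevmap humem)
        (by linarith) hψlt
      refine ⟨T - v, ⟨by linarith [hv.2], by linarith [hv.1]⟩, ?_⟩
      have e : T - (T - v) = v := by ring
      have hxw : x (T - v) = Lb (T - v) := by
        show xh (T - (T - v)) = _
        rw [e, hveq]
      rw [hxw]
      exact hLzero (T - v) ⟨by linarith [hv.2, hu], by linarith [hv.1, htT]⟩
  have hintr : (∫ t in Icc (0:ℝ) T, r t (x t) ∂kr.measure) = 0 := by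
    have hneg : (∫ t in Icc (0:ℝ) T, -(r t (x t)) ∂kr.measure) = 0 := by
      apply BSkor.stieltjes_integral_zero_of_touch hT0 kr hkrc
      · intro t ht
        rw [hkrfun t, hkrfun 0, hclamp_nonpos t ht, hclamp_nonpos 0 le_rfl]
      · exact (BSkor.comp_continuousOn hc hC (fun xx => (hA1 xx).2)
          (fun t ht xx yy h => (hA2 t ht xx yy h).2) hxcont).neg
      · intro t ht
        show -(r t (x t)) ≤ 0
        linarith [(hconstraints t ht).2]
      · intro u t hu hut htT hlt
        have humem : u ∈ Icc (0:ℝ) T := ⟨hu, hut.trans htT⟩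
        have htmem : t ∈ Icc (0:ℝ) T := ⟨hu.trans hut, htT⟩
        rw [hkr_eval u humem, hkr_eval t htmem] at hlt
        have hφlt : φh (T - t) < φh (T - u) := by linarith
        obtain ⟨v, hv, hveq⟩ := hGsφ (T - t) (hrevmap htmem) (T - u) (hrevmap humem)
          (by linarith) hφlt
        refine ⟨T - v, ⟨by linarith [hv.2], by linarith [hv.1]⟩, ?_⟩
        have e : T - (T - v) = v := by ring
        have hxw : x (T - v) = Rb (T - v) := by
          show xh (T - (T - v)) = _
          rw [e, hveq]
        rw [hxw]
        have := hRzero (T - v) ⟨by linarith [hv.2, hu], by linarith [hv.1, htT]⟩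
        rw [this]
        ring
    rw [MeasureTheory.integral_neg] at hneg
    linarith
  have hk0 : k 0 = 0 := by simp only [hkdef]; rw [hkr0, hkl0]; ring
  constructor
  · -- existence
    refine ⟨x, k, hxcont, hkcont, hxk, hconstraints, hk0,
      kr, kl, hkrc, hklc, hkr0, hkl0, fun t _ => rfl, hintl, hintr⟩
  · -- uniqueness
    have key : ∀ x₁ k₁ x₂ k₂ : ℝ → ℝ,
        IsBackwardSkorokhodSolution T l r s a x₁ k₁ →
        IsBackwardSkorokhodSolution T l r s a x₂ k₂ →
        ∀ t ∈ Icc (0:ℝ) T, x₁ t - x₂ t ≤ 0 := by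
      intro x₁ k₁ x₂ k₂ h1 h2 t₀ ht₀
      obtain ⟨hx1c, hk1c, hrel1, hcon1, hk10, kr1, kl1, hkr1c, hkl1c, hkr10, hkl10,
        hk1eq, hintl1, hintr1⟩ := h1
      obtain ⟨hx2c, hk2c, hrel2, hcon2, hk20, kr2, kl2, hkr2c, hkl2c, hkr20, hkl20,
        hk2eq, hintl2, hintr2⟩ := h2
      by_contra hpos
      push_neg at hpos
      set θ := x₁ t₀ - x₂ t₀ with hθdef
      have hθpos : 0 < θ := hpos
      have hΔT : x₁ T - x₂ T = 0 := by
        have e1 := hrel1 T hTmem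
        have e2 := hrel2 T hTmem
        rw [e1, e2]; ring
      set A : Set ℝ := Icc t₀ T ∩ (fun u => x₁ u - x₂ u) ⁻¹' Iic (θ/2) with hAdef
      have hΔc : ContinuousOn (fun u => x₁ u - x₂ u) (Icc t₀ T) :=
        (hx1c.sub hx2c).mono (Icc_subset_Icc ht₀.1 le_rfl)
      have hAclosed : IsClosed A :=
        hΔc.preimage_isClosed_of_isClosed isClosed_Icc isClosed_Iic
      have hAne : A.Nonempty := ⟨T, ⟨ht₀.2, le_rfl⟩, by simp only [mem_preimage, mem_Iic]; linarith⟩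
      have hAbdd : BddBelow A := ⟨t₀, fun u hu => hu.1.1⟩
      set t₁ := sInf A with ht₁def
      have ht₁A : t₁ ∈ A := hAclosed.csInf_mem hAne hAbdd
      have ht₀t₁ : t₀ ≤ t₁ := ht₁A.1.1
      have ht₁T : t₁ ≤ T := ht₁A.1.2
      have ht₁le : x₁ t₁ - x₂ t₁ ≤ θ/2 := ht₁A.2
      have hmid : ∀ v ∈ Ioo t₀ t₁, θ/2 < x₁ v - x₂ v := by
        intro v hv
        by_contra hle
        push_neg at hle
        have hvA : v ∈ A := ⟨⟨hv.1.le, hv.2.le.trans ht₁T⟩, hle⟩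
        have := csInf_le hAbdd hvA
        rw [← ht₁def] at this
        linarith [hv.2]
      have ht₀mem : t₀ ∈ Icc (0:ℝ) T := ht₀
      have ht₁mem : t₁ ∈ Icc (0:ℝ) T := ⟨ht₀.1.trans ht₀t₁, ht₁T⟩
      -- flatness of kr1 on [t₀, t₁]
      have hflat1 : kr1 t₁ = kr1 t₀ := by
        apply BSkor.flat_of_integral_zero hkr1c
          (f := fun v => r v (x₁ v))
          (BSkor.comp_continuousOn hc hC (fun xx => (hA1 xx).2)
            (fun t ht xx yy h => (hA2 t ht xx yy h).2) hx1c)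
          (fun v hv => (hcon1 v hv).2) hintr1 ht₀.1 ht₀t₁ ht₁T
        intro v hv
        show (0:ℝ) < r v (x₁ v)
        have hvmem : v ∈ Icc (0:ℝ) T := ⟨ht₀.1.trans hv.1.le, hv.2.le.trans ht₁T⟩
        have hΔv := hmid v hv
        have hxy : x₂ v ≤ x₁ v := by linarith
        have hb := (hA2 v hvmem (x₁ v) (x₂ v) hxy).2.1
        have hr2 := (hcon2 v hvmem).2
        nlinarith
      -- flatness of kl2 on [t₀, t₁]
      have hflat2 : kl2 t₁ = kl2 t₀ := by
        apply BSkor.flat_of_integral_zero hkl2c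
          (f := fun v => -(l v (x₂ v)))
          ((BSkor.comp_continuousOn hc hC (fun xx => (hA1 xx).1)
            (fun t ht xx yy h => (hA2 t ht xx yy h).1) hx2c).neg)
          (fun v hv => by show (0:ℝ) ≤ -(l v (x₂ v)); linarith [(hcon2 v hv).1])
          (by rw [MeasureTheory.integral_neg, hintl2, neg_zero]) ht₀.1 ht₀t₁ ht₁T
        intro v hv
        show (0:ℝ) < -(l v (x₂ v))
        have hvmem : v ∈ Icc (0:ℝ) T := ⟨ht₀.1.trans hv.1.le, hv.2.le.trans ht₁T⟩
        have hΔv := hmid v hv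
        have hxy : x₂ v ≤ x₁ v := by linarith
        have hb := (hA2 v hvmem (x₁ v) (x₂ v) hxy).1.1
        have hl1 := (hcon1 v hvmem).1
        nlinarith
      have hmono1 : kl1 t₀ ≤ kl1 t₁ := kl1.mono ht₀t₁
      have hmono2 : kr2 t₀ ≤ kr2 t₁ := kr2.mono ht₀t₁
      have e10 := hrel1 t₀ ht₀mem
      have e11 := hrel1 t₁ ht₁mem
      have e20 := hrel2 t₀ ht₀mem
      have e21 := hrel2 t₁ ht₁mem
      have f10 := hk1eq t₀ ht₀mem
      have f11 := hk1eq t₁ ht₁mem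
      have f20 := hk2eq t₀ ht₀mem
      have f21 := hk2eq t₁ ht₁mem
      have : θ ≤ θ/2 := by
        have h1 : x₁ t₀ - x₂ t₀ - (x₁ t₁ - x₂ t₁) =
            (k₁ t₁ - k₁ t₀) - (k₂ t₁ - k₂ t₀) := by
          rw [e10, e11, e20, e21]; ring
        rw [f10, f11, f20, f21] at h1
        rw [hflat1, hflat2] at h1
        simp only [hθdef]
        linarith
      linarith
    intro x₁ k₁ x₂ k₂ h1 h2 t ht
    have hxeq : ∀ u ∈ Icc (0:ℝ) T, x₁ u = x₂ u := by
      intro u hu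
      have g1 := key x₁ k₁ x₂ k₂ h1 h2 u hu
      have g2 := key x₂ k₂ x₁ k₁ h2 h1 u hu
      linarith
    refine ⟨hxeq t ht, ?_⟩
    obtain ⟨-, -, hrel1, -, hk10, -⟩ := h1
    obtain ⟨-, -, hrel2, -, hk20, -⟩ := h2
    have hdiff : ∀ u ∈ Icc (0:ℝ) T, k₁ T - k₁ u = k₂ T - k₂ u := by
      intro u hu
      have e1 := hrel1 u hu
      have e2 := hrel2 u hu
      have := hxeq u hu
      rw [e1, e2] at this
      linarith
    have hT_eq : k₁ T = k₂ T := by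
      have := hdiff 0 h0mem
      rw [hk10, hk20] at this
      linarith
    have := hdiff t ht
    linarith
end
end

section
/- Let T > 0 and suppose that for i = 1, 2 the pairs (l^i, r^i) satisfy Assumption (A) with common constants 0 < c < C < ∞. Given a^i ∈ ℝ and continuous s^i : [0,T] → ℝ with l^i(T, a^i) ≤ 0 ≤ r^i(T, a^i), let (x^i, k^i) be a solution of the backward Skorokhod problem BSP_{l^i}^{r^i}(s^i, a^i), i = 1, 2. Then sup_{t∈[0,T]} |k¹_t − k²_t| ≤ 2(C/c)|a¹ − a²| + 4(C/c) · sup_{t∈[0,T]} |s¹_t − s²_t| + (2/c) · max(L̄_T, R̄_T), where L̄_T = sup_{(t,x)∈[0,T]×ℝ} |l¹(t,x) − l²(t,x)| and R̄_T = sup_{(t,x)∈[0,T]×ℝ} |r¹(t,x) − r²(t,x)|. -/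
open MeasureTheory Set
open Function Filter

noncomputable section

lemma lipAbs {T c C : ℝ} {l : ℝ → ℝ → ℝ}
    (hlip : ∀ t ∈ Icc (0:ℝ) T, ∀ x y : ℝ, y ≤ x →
      c * (x - y) ≤ l t x - l t y ∧ l t x - l t y ≤ C * (x - y))
    (hc : 0 ≤ c) :
    ∀ t ∈ Icc (0:ℝ) T, ∀ x y : ℝ, |l t x - l t y| ≤ C * |x - y| := by
  intro t ht x y
  rcases le_total y x with h | h
  · have := hlip t ht x y h
    rw [abs_of_nonneg (by nlinarith [this.1]), abs_of_nonneg (by linarith)]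
    exact this.2
  · have := hlip t ht y x h
    rw [abs_sub_comm, abs_sub_comm x y, abs_of_nonneg (by nlinarith [this.1]),
      abs_of_nonneg (by linarith)]
    exact this.2

lemma comp_contOn {T C : ℝ} {l : ℝ → ℝ → ℝ} {x : ℝ → ℝ} (hC : 0 < C)
    (hl : ∀ y : ℝ, ContinuousOn (fun t => l t y) (Icc 0 T))
    (hlip : ∀ t ∈ Icc (0:ℝ) T, ∀ a b : ℝ, |l t a - l t b| ≤ C * |a - b|)
    (hx : ContinuousOn x (Icc 0 T)) :
    ContinuousOn (fun t => l t (x t)) (Icc 0 T) := by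
  intro t₀ ht₀
  rw [Metric.continuousWithinAt_iff]
  intro ε hε
  obtain ⟨δ₁, hδ₁, h₁⟩ := Metric.continuousWithinAt_iff.1 (hl (x t₀) t₀ ht₀) (ε / 2)
    (by linarith)
  obtain ⟨δ₂, hδ₂, h₂⟩ := Metric.continuousWithinAt_iff.1 (hx t₀ ht₀) (ε / (2 * C))
    (by positivity)
  refine ⟨min δ₁ δ₂, lt_min hδ₁ hδ₂, fun {t} ht hdist => ?_⟩
  have hd1 := h₁ ht (lt_of_lt_of_le hdist (min_le_left _ _))
  have hd2 := h₂ ht (lt_of_lt_of_le hdist (min_le_right _ _))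
  rw [Real.dist_eq] at hd1 hd2 ⊢
  have hlt : |l t (x t) - l t (x t₀)| ≤ C * |x t - x t₀| := hlip t ht _ _
  have hmul : C * |x t - x t₀| < C * (ε / (2 * C)) := mul_lt_mul_of_pos_left hd2 hC
  have hCe : C * (ε / (2 * C)) = ε / 2 := by field_simp
  calc |l t (x t) - l t₀ (x t₀)|
      ≤ |l t (x t) - l t (x t₀)| + |l t (x t₀) - l t₀ (x t₀)| := abs_sub_le _ _ _
    _ < ε / 2 + ε / 2 := by
        rw [hCe] at hmul; exact add_lt_add (lt_of_le_of_lt hlt hmul) hd1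
    _ = ε := by ring

lemma stieltjes_flat {T : ℝ} (μf : StieltjesFunction ℝ) (hμc : Continuous μf)
    (f : ℝ → ℝ) (hf : ContinuousOn f (Icc 0 T))
    (hneg : ∀ u ∈ Icc (0:ℝ) T, f u ≤ 0)
    (hint : ∫ u in Icc (0:ℝ) T, f u ∂μf.measure = 0)
    {t τ : ℝ} (ht : 0 ≤ t) (htτ : t ≤ τ) (hτ : τ ≤ T)
    (hneg' : ∀ u ∈ Ico t τ, f u < 0) :
    μf τ = μf t := by
  have hleft : ∀ a : ℝ, leftLim (⇑μf) a = μf a := fun a =>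
    leftLim_eq_of_tendsto
      ((hμc.tendsto a).mono_left nhdsWithin_le_nhds)
  have hIntOn : IntegrableOn f (Icc 0 T) μf.measure :=
    hf.integrableOn_compact isCompact_Icc
  have hae : (fun u => -f u) =ᵐ[μf.measure.restrict (Icc 0 T)] 0 := by
    have hnn : 0 ≤ᵐ[μf.measure.restrict (Icc 0 T)] fun u => -f u := by
      filter_upwards [ae_restrict_mem measurableSet_Icc] with u hu
      simpa using hneg u hu
    have hint' : ∫ u, -f u ∂(μf.measure.restrict (Icc 0 T)) = 0 := by
      rw [integral_neg]; simpa using hint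
    exact (integral_eq_zero_iff_of_nonneg_ae hnn hIntOn.neg).1 hint'
  have hnull : μf.measure.restrict (Icc 0 T) {u | f u ≠ 0} = 0 := by
    have := hae
    rw [Filter.EventuallyEq, ae_iff] at this
    simpa using this
  have hnull' : μf.measure.restrict (Icc 0 T) (Ico t τ) = 0 :=
    measure_mono_null (fun u hu => ne_of_lt (hneg' u hu)) hnull
  have hsub : Ico t τ ⊆ Icc 0 T := fun u hu => ⟨le_trans ht hu.1, le_trans hu.2.le hτ⟩
  have hIco : μf.measure (Ico t τ) = 0 := by
    rw [Measure.restrict_apply measurableSet_Ico, inter_eq_self_of_subset_left hsub] at hnull'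
    exact hnull'
  rw [StieltjesFunction.measure_Ico, hleft, hleft, ENNReal.ofReal_eq_zero] at hIco
  have := μf.mono htτ
  linarith

/-- Key one-sided estimate on `w = x₁ - x₂ + s₁ - s₂`. -/
lemma key_bound
    (T c C : ℝ) (hT : 0 < T) (hc : 0 < c) (hcC : c < C)
    (l₁ r₁ l₂ r₂ : ℝ → ℝ → ℝ)
    (hA₁ : AssumptionA T c C l₁ r₁) (hA₂ : AssumptionA T c C l₂ r₂)
    (a₁ a₂ : ℝ) (s₁ s₂ x₁ k₁ x₂ k₂ : ℝ → ℝ)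
    (h₁ : IsBackwardSkorokhodSolution T l₁ r₁ s₁ a₁ x₁ k₁)
    (h₂ : IsBackwardSkorokhodSolution T l₂ r₂ s₂ a₂ x₂ k₂)
    (Ms Ml Mr : ℝ)
    (hMs : ∀ t ∈ Icc (0:ℝ) T, |s₁ t - s₂ t| ≤ Ms)
    (hMl : ∀ t ∈ Icc (0:ℝ) T, ∀ x : ℝ, |l₁ t x - l₂ t x| ≤ Ml)
    (hMr : ∀ t ∈ Icc (0:ℝ) T, ∀ x : ℝ, |r₁ t x - r₂ t x| ≤ Mr) :
    ∀ t ∈ Icc (0:ℝ) T,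
      x₁ t - x₂ t + (s₁ t - s₂ t) ≤ max |a₁ - a₂| (max Ml Mr / c) + Ms := by
  obtain ⟨hx₁c, hk₁c, hx₁eq, hbar₁, hk₁0, kr₁, kl₁, hkr₁c, hkl₁c, hkr₁0, hkl₁0,
    hk₁split, hkl₁int, hkr₁int⟩ := h₁
  obtain ⟨hx₂c, hk₂c, hx₂eq, hbar₂, hk₂0, kr₂, kl₂, hkr₂c, hkl₂c, hkr₂0, hkl₂0,
    hk₂split, hkl₂int, hkr₂int⟩ := h₂
  have hC : (0:ℝ) < C := lt_trans hc hcC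
  set M : ℝ := max Ml Mr with hM
  have hMl0 : 0 ≤ Ml := le_trans (abs_nonneg _) (hMl 0 ⟨le_rfl, hT.le⟩ 0)
  have hMr0 : 0 ≤ Mr := le_trans (abs_nonneg _) (hMr 0 ⟨le_rfl, hT.le⟩ 0)
  have hM0 : 0 ≤ M := le_trans hMl0 (le_max_left _ _)
  set θ : ℝ := M / c with hθ
  have hθ0 : 0 ≤ θ := div_nonneg hM0 hc.le
  have hcθ : c * θ = M := mul_div_cancel₀ M (ne_of_gt hc)
  have hf₂cont : ContinuousOn (fun u => l₂ u (x₂ u)) (Icc 0 T) :=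
    comp_contOn hC (fun y => (hA₂.1 y).1)
      (lipAbs (fun t ht x y h => (hA₂.2.1 t ht x y h).1) hc.le) hx₂c
  have hg₁cont : ContinuousOn (fun u => r₁ u (x₁ u)) (Icc 0 T) :=
    comp_contOn hC (fun y => (hA₁.1 y).2)
      (lipAbs (fun t ht x y h => (hA₁.2.1 t ht x y h).2) hc.le) hx₁c
  intro t ht
  -- stopping set
  set S : Set ℝ := {u | u ∈ Icc t T ∧ x₁ u - x₂ u ≤ θ} ∪ {T} with hS
  have hTS : T ∈ S := Or.inr rfl
  have hSlb : ∀ u ∈ S, t ≤ u := by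
    rintro u (⟨hu, _⟩ | hu)
    · exact hu.1
    · rw [mem_singleton_iff] at hu; rw [hu]; exact ht.2
  have hSbdd : BddBelow S := ⟨t, fun u hu => hSlb u hu⟩
  have hSclosed : IsClosed S := by
    have h1 : IsClosed {u | u ∈ Icc t T ∧ x₁ u - x₂ u ≤ θ} := by
      have : {u | u ∈ Icc t T ∧ x₁ u - x₂ u ≤ θ}
          = Icc t T ∩ (fun u => x₁ u - x₂ u) ⁻¹' (Iic θ) := rfl
      rw [this]
      exact ContinuousOn.preimage_isClosed_of_isClosed
        (((hx₁c.sub hx₂c)).mono (Icc_subset_Icc ht.1 le_rfl)) isClosed_Icc isClosed_Iic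
    exact h1.union isClosed_singleton
  set τ : ℝ := sInf S with hτdef
  have hτS : τ ∈ S := hSclosed.csInf_mem ⟨T, hTS⟩ hSbdd
  have htτ : t ≤ τ := le_csInf ⟨T, hTS⟩ hSlb
  have hτT : τ ≤ T := csInf_le hSbdd hTS
  have hτIcc : τ ∈ Icc (0:ℝ) T := ⟨le_trans ht.1 htτ, hτT⟩
  have hIcoP : ∀ u ∈ Ico t τ, θ < x₁ u - x₂ u ∧ u ∈ Icc (0:ℝ) T := by
    intro u hu
    have huI : u ∈ Icc (0:ℝ) T := ⟨le_trans ht.1 hu.1, le_trans hu.2.le hτT⟩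
    have hunS : u ∉ S := fun h => absurd (csInf_le hSbdd h) (not_le.2 hu.2)
    have huIcc : u ∈ Icc t T := ⟨hu.1, le_trans hu.2.le hτT⟩
    have : ¬(x₁ u - x₂ u ≤ θ) := fun h => hunS (Or.inl ⟨huIcc, h⟩)
    exact ⟨not_le.1 this, huI⟩
  -- flatness of kl₂ on [t, τ]
  have hflat₂ : kl₂ τ = kl₂ t := by
    refine stieltjes_flat kl₂ hkl₂c _ hf₂cont (fun u hu => (hbar₂ u hu).1) hkl₂int
      ht.1 htτ hτT (fun u hu => ?_)
    obtain ⟨hv, huI⟩ := hIcoP u hu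
    rcases lt_or_eq_of_le ((hbar₂ u huI).1) with h | h
    · exact h
    · exfalso
      have hle : x₂ u ≤ x₁ u := by linarith
      have hlow := (hA₁.2.1 u huI (x₁ u) (x₂ u) hle).1.1
      have habs := abs_le.1 (hMl u huI (x₂ u))
      have hub := (hbar₁ u huI).1
      have hcv : M < c * (x₁ u - x₂ u) := by
        calc M = c * θ := hcθ.symm
        _ < c * (x₁ u - x₂ u) := by exact mul_lt_mul_of_pos_left hv hc
      have hMlM : Ml ≤ M := le_max_left _ _
      linarith [habs.1]
  -- flatness of kr₁ on [t, τ]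
  have hflat₁ : kr₁ τ = kr₁ t := by
    refine stieltjes_flat kr₁ hkr₁c (fun u => -(r₁ u (x₁ u))) hg₁cont.neg
      (fun u hu => neg_nonpos.2 (hbar₁ u hu).2)
      (by rw [integral_neg, hkr₁int, neg_zero]) ht.1 htτ hτT (fun u hu => ?_)
    obtain ⟨hv, huI⟩ := hIcoP u hu
    rcases lt_or_eq_of_le ((hbar₁ u huI).2) with h | h
    · simpa using h
    · exfalso
      have hle : x₂ u ≤ x₁ u := by linarith
      have hlow := (hA₂.2.1 u huI (x₁ u) (x₂ u) hle).2.1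
      have habs := abs_le.1 (hMr u huI (x₁ u))
      have hub := (hbar₂ u huI).2
      have hcv : M < c * (x₁ u - x₂ u) := by
        calc M = c * θ := hcθ.symm
        _ < c * (x₁ u - x₂ u) := mul_lt_mul_of_pos_left hv hc
      have hMrM : Mr ≤ M := le_max_right _ _
      linarith [habs.2]
  -- monotonicity step: w t ≤ w τ
  have h1t := hx₁eq t ht
  have h1τ := hx₁eq τ hτIcc
  have h2t := hx₂eq t ht
  have h2τ := hx₂eq τ hτIcc
  have hk1t := hk₁split t ht
  have hk1τ := hk₁split τ hτIcc
  have hk2t := hk₂split t ht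
  have hk2τ := hk₂split τ hτIcc
  have hmono1 : kl₁ t ≤ kl₁ τ := kl₁.mono htτ
  have hmono2 : kr₂ t ≤ kr₂ τ := kr₂.mono htτ
  have hwstep : x₁ t - x₂ t + (s₁ t - s₂ t) ≤ x₁ τ - x₂ τ + (s₁ τ - s₂ τ) := by
    linarith
  -- bound at τ
  have hwτ : x₁ τ - x₂ τ + (s₁ τ - s₂ τ) ≤ max |a₁ - a₂| θ + Ms := by
    have hsτ := abs_le.1 (hMs τ hτIcc)
    rcases hτS with ⟨_, hvτ⟩ | hτT'
    · have := le_max_right |a₁ - a₂| θ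
      linarith
    · rw [mem_singleton_iff] at hτT'
      have hx1T : x₁ T = a₁ := by
        have := hx₁eq T ⟨hT.le, le_rfl⟩; linarith
      have hx2T : x₂ T = a₂ := by
        have := hx₂eq T ⟨hT.le, le_rfl⟩; linarith
      have hmm := le_max_left |a₁ - a₂| θ
      have habs := le_abs_self (a₁ - a₂)
      rw [hτT'] at hsτ ⊢
      rw [hx1T, hx2T]
      linarith
  exact le_trans hwstep hwτ

/-- Continuous dependence of the reflection term of the backward Skorokhod problem
on the terminal value, the input function and the reflecting boundaries:
`sup_t |k¹_t - k²_t| ≤ 2(C/c)·|a¹ - a²| + 4(C/c)·sup_t |s¹_t - s²_t| +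
(2/c)·max(L̄_T, R̄_T)`, stated via arbitrary upper bounds `Ms, Ml, Mr` of the
respective suprema. -/
theorem backward_skorokhod_problem_stability
    (T c C : ℝ) (hT : 0 < T) (hc : 0 < c) (hcC : c < C)
    (l₁ r₁ l₂ r₂ : ℝ → ℝ → ℝ)
    (hA₁ : AssumptionA T c C l₁ r₁) (hA₂ : AssumptionA T c C l₂ r₂)
    (a₁ a₂ : ℝ) (s₁ s₂ x₁ k₁ x₂ k₂ : ℝ → ℝ)
    (hs₁ : ContinuousOn s₁ (Icc 0 T)) (hs₂ : ContinuousOn s₂ (Icc 0 T))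
    (hla₁ : l₁ T a₁ ≤ 0) (hra₁ : 0 ≤ r₁ T a₁)
    (hla₂ : l₂ T a₂ ≤ 0) (hra₂ : 0 ≤ r₂ T a₂)
    (h₁ : IsBackwardSkorokhodSolution T l₁ r₁ s₁ a₁ x₁ k₁)
    (h₂ : IsBackwardSkorokhodSolution T l₂ r₂ s₂ a₂ x₂ k₂)
    (Ms Ml Mr : ℝ)
    (hMs : ∀ t ∈ Icc (0:ℝ) T, |s₁ t - s₂ t| ≤ Ms)
    (hMl : ∀ t ∈ Icc (0:ℝ) T, ∀ x : ℝ, |l₁ t x - l₂ t x| ≤ Ml)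
    (hMr : ∀ t ∈ Icc (0:ℝ) T, ∀ x : ℝ, |r₁ t x - r₂ t x| ≤ Mr) :
    ∀ t ∈ Icc (0:ℝ) T,
      |k₁ t - k₂ t| ≤ 2 * (C / c) * |a₁ - a₂| + 4 * (C / c) * Ms +
        (2 / c) * max Ml Mr := by
  intro t ht
  have h0Icc : (0:ℝ) ∈ Icc (0:ℝ) T := ⟨le_rfl, hT.le⟩
  have hMs' : ∀ u ∈ Icc (0:ℝ) T, |s₂ u - s₁ u| ≤ Ms := fun u hu => by
    rw [abs_sub_comm]; exact hMs u hu
  have hMl' : ∀ u ∈ Icc (0:ℝ) T, ∀ x : ℝ, |l₂ u x - l₁ u x| ≤ Ml := fun u hu x => by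
    rw [abs_sub_comm]; exact hMl u hu x
  have hMr' : ∀ u ∈ Icc (0:ℝ) T, ∀ x : ℝ, |r₂ u x - r₁ u x| ≤ Mr := fun u hu x => by
    rw [abs_sub_comm]; exact hMr u hu x
  have hkey := key_bound T c C hT hc hcC l₁ r₁ l₂ r₂ hA₁ hA₂ a₁ a₂ s₁ s₂ x₁ k₁ x₂ k₂
    h₁ h₂ Ms Ml Mr hMs hMl hMr
  have hkey' := key_bound T c C hT hc hcC l₂ r₂ l₁ r₁ hA₂ hA₁ a₂ a₁ s₂ s₁ x₂ k₂ x₁ k₁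
    h₂ h₁ Ms Ml Mr hMs' hMl' hMr'
  have habs_comm : |a₂ - a₁| = |a₁ - a₂| := abs_sub_comm _ _
  have hwt_le := hkey t ht
  have hw0_le := hkey 0 h0Icc
  have hwt_ge := hkey' t ht
  have hw0_ge := hkey' 0 h0Icc
  rw [habs_comm] at hwt_ge hw0_ge
  obtain ⟨_, _, hx₁eq, _, hk₁0, _⟩ := h₁
  obtain ⟨_, _, hx₂eq, _, hk₂0, _⟩ := h₂
  have e1t := hx₁eq t ht
  have e10 := hx₁eq 0 h0Icc
  have e2t := hx₂eq t ht
  have e20 := hx₂eq 0 h0Icc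
  -- k₁ t - k₂ t = w 0 - w t
  have hkform : k₁ t - k₂ t =
      (x₁ 0 - x₂ 0 + (s₁ 0 - s₂ 0)) - (x₁ t - x₂ t + (s₁ t - s₂ t)) := by
    linarith
  have hMs0 : 0 ≤ Ms := le_trans (abs_nonneg _) (hMs 0 h0Icc)
  have hMl0 : 0 ≤ Ml := le_trans (abs_nonneg _) (hMl 0 h0Icc 0)
  have hMr0 : 0 ≤ Mr := le_trans (abs_nonneg _) (hMr 0 h0Icc 0)
  have hM0 : 0 ≤ max Ml Mr := le_trans hMl0 (le_max_left _ _)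
  have ha0 : 0 ≤ |a₁ - a₂| := abs_nonneg _
  have h1C : (1:ℝ) ≤ C / c := (one_le_div hc).2 hcC.le
  have hmaxle : max |a₁ - a₂| (max Ml Mr / c) ≤ |a₁ - a₂| + max Ml Mr / c :=
    max_le (le_add_of_nonneg_right (div_nonneg hM0 hc.le)) (le_add_of_nonneg_left ha0)
  have h1 : |a₁ - a₂| ≤ C / c * |a₁ - a₂| := le_mul_of_one_le_left ha0 h1C
  have h2 : Ms ≤ C / c * Ms := le_mul_of_one_le_left hMs0 h1C
  have h3 : 2 / c * max Ml Mr = 2 * (max Ml Mr / c) := by ring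
  rw [abs_le]
  constructor <;> [skip; skip] <;> linarith
end
end

section
/- Let T > 0, let l, r : [0,T] × ℝ → ℝ satisfy Assumption (A), let s : [0,T] → ℝ be continuous and let a ∈ ℝ satisfy l(T, a) ≤ 0 ≤ r(T, a). Define the time-reversed data s̄_t := a + s_T − s_{T−t}, l̄(t, x) := l(T−t, x), r̄(t, x) := r(T−t, x) for (t, x) ∈ [0,T] × ℝ. If (x̄, K̄) is a solution of the Skorokhod problem SP_{l̄}^{r̄}(s̄), then the pair (x, k) defined by x_t := x̄_{T−t} and k_t := K̄_T − K̄_{T−t} for t ∈ [0,T] is a solution of the backward Skorokhod problem BSP_l^r(s, a). -/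
open MeasureTheory Set

noncomputable section

def rev (T : ℝ) (f : StieltjesFunction ℝ) (hf : Continuous f) : StieltjesFunction ℝ where
  toFun t := f T - f (T - t)
  mono' a b hab := by
    have : f (T - b) ≤ f (T - a) := f.mono (by linarith)
    simp only; linarith
  right_continuous' t :=
    (continuous_const.sub (hf.comp (continuous_const.sub continuous_id))).continuousWithinAt

lemma rev_apply (T : ℝ) (f : StieltjesFunction ℝ) (hf : Continuous f) (t : ℝ) :
    rev T f hf t = f T - f (T - t) := rfl

lemma rev_measure (T : ℝ) (f : StieltjesFunction ℝ) (hf : Continuous f) :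
    (rev T f hf).measure = Measure.map (fun t => T - t) f.measure := by
  have hmeas : Measurable (fun t : ℝ => T - t) := (continuous_const.sub continuous_id).measurable
  have hll : ∀ x : ℝ, Function.leftLim (⇑f) x = f x := fun x =>
    leftLim_eq_of_tendsto (h := nhdsLT_neBot x) (hf.continuousAt.continuousWithinAt.tendsto)
  refine Measure.ext_of_Ioc _ _ (fun p q hpq => ?_)
  rw [StieltjesFunction.measure_Ioc, Measure.map_apply hmeas measurableSet_Ioc]
  have hpre : (fun t : ℝ => T - t) ⁻¹' Ioc p q = Ico (T - q) (T - p) := by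
    ext u; simp only [mem_preimage, mem_Ioc, mem_Ico]; constructor <;> intro h <;>
      constructor <;> linarith [h.1, h.2]
  rw [hpre, StieltjesFunction.measure_Ico, hll, hll, rev_apply, rev_apply]
  ring_nf


/-- Time reversal: a solution `(x̄, K̄)` of the (forward) Skorokhod problem for the
time-reversed data `s̄_t = a + s_T - s_{T-t}`, `l̄(t,x) = l(T-t,x)`,
`r̄(t,x) = r(T-t,x)` yields a solution `(x_t, k_t) := (x̄_{T-t}, K̄_T - K̄_{T-t})`
of the backward Skorokhod problem `BSP_l^r(s, a)`. -/
theorem backward_skorokhod_from_time_reversal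
    (T c C : ℝ) (hT : 0 < T) (hc : 0 < c) (hcC : c < C)
    (l r : ℝ → ℝ → ℝ) (hA : AssumptionA T c C l r)
    (s : ℝ → ℝ) (hs : ContinuousOn s (Icc 0 T))
    (a : ℝ) (hla : l T a ≤ 0) (hra : 0 ≤ r T a)
    (xb Kb : ℝ → ℝ)
    (hsol : IsSkorokhodSolution T (fun t x => l (T - t) x) (fun t x => r (T - t) x)
      (fun t => a + s T - s (T - t)) xb Kb) :
    IsBackwardSkorokhodSolution T l r s a
      (fun t => xb (T - t)) (fun t => Kb T - Kb (T - t)) := by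
  obtain ⟨hxc, hKc, heq, hcon, Kr, Kl, hKrc, hKlc, hKr0, hKl0, hKdiff, hKl, hKr⟩ := hsol
  have hmaps : ∀ t ∈ Icc (0:ℝ) T, T - t ∈ Icc (0:ℝ) T := by
    intro t ht; exact ⟨by linarith [ht.2], by linarith [ht.1]⟩
  have hφ : ContinuousOn (fun t : ℝ => T - t) (Icc 0 T) :=
    (continuous_const.sub continuous_id).continuousOn
  have hemb : MeasurableEmbedding (fun t : ℝ => T - t) :=
    (Homeomorph.subLeft T).toMeasurableEquiv.measurableEmbedding
  have hpre : (fun t : ℝ => T - t) ⁻¹' Icc 0 T = Icc (0:ℝ) T := by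
    ext u; simp only [mem_preimage, mem_Icc]
    constructor <;> intro h <;> constructor <;> linarith [h.1, h.2]
  have hKb0 : Kb 0 = 0 := by
    rw [hKdiff 0 ⟨le_rfl, hT.le⟩, hKr0, hKl0, sub_zero]
  refine ⟨hxc.comp hφ hmaps, continuousOn_const.sub (hKc.comp hφ hmaps), ?_, ?_, by simp, ?_⟩
  · intro t ht
    have h1 : xb (T - t) = a + s T - s (T - (T - t)) + Kb (T - t) := heq (T - t) (hmaps t ht)
    rw [show T - (T - t) = t by ring] at h1
    simp only [show T - T = (0:ℝ) by ring, hKb0]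
    linarith
  · intro t ht
    have h := hcon (T - t) (hmaps t ht)
    simp only at h
    rwa [show T - (T - t) = t by ring] at h
  · refine ⟨rev T Kr hKrc, rev T Kl hKlc,
      continuous_const.sub (hKrc.comp (continuous_const.sub continuous_id)),
      continuous_const.sub (hKlc.comp (continuous_const.sub continuous_id)),
      by simp [rev_apply], by simp [rev_apply], ?_, ?_, ?_⟩
    · intro t ht
      simp only [rev_apply]
      rw [hKdiff T ⟨hT.le, le_rfl⟩, hKdiff (T - t) (hmaps t ht)]
      ring
    · rw [rev_measure T Kl hKlc, hemb.setIntegral_map, hpre]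
      refine integral_eq_zero_of_ae ((ae_restrict_iff' measurableSet_Icc).2
        (ae_iff.2 (measure_mono_null ?_ hKl)))
      intro u hu
      simp only [mem_setOf_eq, Classical.not_imp] at hu
      obtain ⟨hmem, hne⟩ := hu
      rw [show T - (T - u) = u by ring] at hne
      exact ⟨hmem, lt_of_le_of_ne (hcon u hmem).1 hne⟩
    · rw [rev_measure T Kr hKrc, hemb.setIntegral_map, hpre]
      refine integral_eq_zero_of_ae ((ae_restrict_iff' measurableSet_Icc).2
        (ae_iff.2 (measure_mono_null ?_ hKr)))
      intro u hu
      simp only [mem_setOf_eq, Classical.not_imp] at hu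
      obtain ⟨hmem, hne⟩ := hu
      rw [show T - (T - u) = u by ring] at hne
      exact ⟨hmem, lt_of_le_of_ne (hcon u hmem).2 (Ne.symm hne)⟩
end
end

section
/- Let (Ω, ℱ) be a measurable space, 𝒫 a nonempty family of probability measures on (Ω, ℱ), and Ê the associated upper expectation. Let T > 0 and 0 < c ≤ C < ∞. Let L, R : Ω × [0,T] × ℝ → ℝ be such that for every (ω, t) and all x ≥ y, c(x − y) ≤ L(ω,t,x) − L(ω,t,y) ≤ C(x − y) and c(x − y) ≤ R(ω,t,x) − R(ω,t,y) ≤ C(x − y). For i = 1, 2, let (y^i_t)_{t∈[0,T]} be a family of real-valued measurable functions on Ω, integrable under every P ∈ 𝒫, with sup_{t∈[0,T]} Ê[|y^i_t|] < ∞, and suppose all the upper expectations below are finite. Define s̄^i_t := Ê[y^i_{T−t}], l̄^i(t, x) := Ê[L(·, T−t, y^i_{T−t} − Ê[y^i_{T−t}] + x)] and r̄^i(t, x) := Ê[R(·, T−t, y^i_{T−t} − Ê[y^i_{T−t}] + x)] for (t, x) ∈ [0,T] × ℝ, and assume s̄^i is continuous and l̄^i, r̄^i satisfy Assumption (A) with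 constants c, C. If (x̄^i, Ā^i) is a solution of the Skorokhod problem SP_{l̄^i}^{r̄^i}(s̄^i) for i = 1, 2, then sup_{t∈[0,T]} |Ā¹_t − Ā²_t| ≤ (3C/c) · sup_{t∈[0,T]} Ê[|y¹_t − y²_t|]. -/
open MeasureTheory Set

noncomputable section

/-- The upper expectation `Ê[ξ] = sup_{P ∈ 𝒬} ∫ ξ dP` of a real-valued random
variable with respect to a family of probability measures `𝒬`. -/
def upperExpR {Ω : Type*} [MeasurableSpace Ω] (𝒬 : Set (Measure Ω))
    (ξ : Ω → ℝ) : ℝ :=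
  ⨆ P ∈ 𝒬, ∫ ω, ξ ω ∂P

/-- The mean-reflection boundary `(t,x) ↦ Ê[L(·, t, y_t - Ê[y_t] + x)]` built
from a running loss function `L` and a family `(y_t)`. -/
def meanBoundary {Ω : Type*} [MeasurableSpace Ω] (𝒬 : Set (Measure Ω))
    (L : Ω → ℝ → ℝ → ℝ) (y : ℝ → Ω → ℝ) : ℝ → ℝ → ℝ :=
  fun t x => upperExpR 𝒬 (fun ω => L ω t (y t ω - upperExpR 𝒬 (y t) + x))

section Aux

variable {Ω : Type*} [MeasurableSpace Ω] {𝒬 : Set (Measure Ω)} {f g : Ω → ℝ}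

lemma bddAbove_inner (hb : BddAbove ((fun P => ∫ ω, f ω ∂P) '' 𝒬)) :
    BddAbove (Set.range fun P : Measure Ω => ⨆ _ : P ∈ 𝒬, ∫ ω, f ω ∂P) := by
  refine (hb.insert 0).mono ?_
  rintro z ⟨P, rfl⟩
  by_cases hP : P ∈ 𝒬
  · haveI : Nonempty (P ∈ 𝒬) := ⟨hP⟩
    exact Or.inr ⟨P, hP, (ciSup_const).symm⟩
  · haveI : IsEmpty (P ∈ 𝒬) := ⟨hP⟩
    exact Or.inl (by simp)

lemma le_upperExpR (hb : BddAbove ((fun P => ∫ ω, f ω ∂P) '' 𝒬)) {P : Measure Ω}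
    (hP : P ∈ 𝒬) : ∫ ω, f ω ∂P ≤ upperExpR 𝒬 f := by
  have h := le_ciSup (bddAbove_inner hb) P
  haveI : Nonempty (P ∈ 𝒬) := ⟨hP⟩
  rwa [ciSup_const] at h

lemma upperExpR_le {z : ℝ} (hz : 0 ≤ z) (h : ∀ P ∈ 𝒬, ∫ ω, f ω ∂P ≤ z) :
    upperExpR 𝒬 f ≤ z :=
  Real.iSup_le (fun P => Real.iSup_le (fun hP => h P hP) hz) hz

lemma upperExpR_nonneg (hb : BddAbove ((fun P => ∫ ω, f ω ∂P) '' 𝒬)) :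
    0 ≤ upperExpR 𝒬 f := by
  by_cases h : ∀ P : Measure Ω, P ∈ 𝒬
  · have h0 := le_upperExpR hb (h 0)
    simpa using h0
  · push_neg at h
    obtain ⟨P₀, hP₀⟩ := h
    have h2 := le_ciSup (bddAbove_inner hb) P₀
    haveI : IsEmpty (P₀ ∈ 𝒬) := ⟨hP₀⟩
    rwa [Real.iSup_of_isEmpty] at h2

lemma upperExpR_close (h𝒬 : 𝒬.Nonempty) {δ : ℝ}
    (hbf : BddAbove ((fun P => ∫ ω, f ω ∂P) '' 𝒬))
    (hbg : BddAbove ((fun P => ∫ ω, g ω ∂P) '' 𝒬))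
    (h : ∀ P ∈ 𝒬, |∫ ω, f ω ∂P - ∫ ω, g ω ∂P| ≤ δ) :
    |upperExpR 𝒬 f - upperExpR 𝒬 g| ≤ δ := by
  obtain ⟨P₀, hP₀⟩ := h𝒬
  have hδ : 0 ≤ δ := le_trans (abs_nonneg _) (h P₀ hP₀)
  have h1 : upperExpR 𝒬 f ≤ upperExpR 𝒬 g + δ :=
    upperExpR_le (by linarith [upperExpR_nonneg hbg]) (fun P hP => by
      have h3 := (abs_sub_le_iff.1 (h P hP)).1
      linarith [le_upperExpR hbg hP])
  have h2 : upperExpR 𝒬 g ≤ upperExpR 𝒬 f + δ :=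
    upperExpR_le (by linarith [upperExpR_nonneg hbf]) (fun P hP => by
      have h3 := (abs_sub_le_iff.1 (h P hP)).2
      linarith [le_upperExpR hbf hP])
  rw [abs_sub_le_iff]
  exact ⟨by linarith, by linarith⟩

end Aux

/-- Deterministic comparison for the Skorokhod problem: a one-sided bound on
the difference of the reflection terms of two solutions with close data. -/
lemma skorokhod_one_side (T c δ ρ : ℝ) (hc : 0 < c) (hδ : 0 ≤ δ) (hρ : 0 ≤ ρ)
    (hT : 0 ≤ T)
    (l₁ r₁ l₂ r₂ : ℝ → ℝ → ℝ) (s₁ s₂ x₁ K₁ x₂ K₂ : ℝ → ℝ)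
    (hl₁ : ∀ t ∈ Icc (0:ℝ) T, ∀ p q : ℝ, q ≤ p → c * (p - q) ≤ l₁ t p - l₁ t q)
    (hr₂ : ∀ t ∈ Icc (0:ℝ) T, ∀ p q : ℝ, q ≤ p → c * (p - q) ≤ r₂ t p - r₂ t q)
    (hcl : ∀ t ∈ Icc (0:ℝ) T, ∀ p : ℝ, |l₁ t p - l₂ t p| ≤ δ)
    (hcr : ∀ t ∈ Icc (0:ℝ) T, ∀ p : ℝ, |r₁ t p - r₂ t p| ≤ δ)
    (hs : ∀ t ∈ Icc (0:ℝ) T, |s₁ t - s₂ t| ≤ ρ)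
    (h₁ : IsSkorokhodSolution T l₁ r₁ s₁ x₁ K₁)
    (h₂ : IsSkorokhodSolution T l₂ r₂ s₂ x₂ K₂) :
    ∀ t ∈ Icc (0:ℝ) T, K₁ t - K₂ t ≤ δ / c + ρ := by
  obtain ⟨hx₁c, hK₁c, heq₁, hcon₁, Kr₁, Kl₁, _, _, hKr₁0, hKl₁0, hK₁eq, hKl₁n, hKr₁n⟩ := h₁
  obtain ⟨hx₂c, hK₂c, heq₂, hcon₂, Kr₂, Kl₂, _, _, hKr₂0, hKl₂0, hK₂eq, hKl₂n, hKr₂n⟩ := h₂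
  set B : ℝ := δ / c + ρ with hBdef
  have hB : 0 ≤ B := add_nonneg (div_nonneg hδ hc.le) hρ
  intro t ht
  by_contra hlt
  push_neg at hlt
  have h0T : (0:ℝ) ∈ Icc (0:ℝ) T := ⟨le_refl 0, hT⟩
  have hK₁0 : K₁ 0 = 0 := by rw [hK₁eq 0 h0T, hKr₁0, hKl₁0, sub_zero]
  have hK₂0 : K₂ 0 = 0 := by rw [hK₂eq 0 h0T, hKr₂0, hKl₂0, sub_zero]
  set S : Set ℝ := Icc 0 t ∩ {u | K₁ u - K₂ u ≤ B} with hSdef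
  have hsubT : Icc (0:ℝ) t ⊆ Icc 0 T := Icc_subset_Icc le_rfl ht.2
  have hS0 : (0:ℝ) ∈ S := ⟨⟨le_refl 0, ht.1⟩, by simp [hK₁0, hK₂0, hB]⟩
  have hvc : ContinuousOn (fun u => K₁ u - K₂ u) (Icc 0 t) :=
    (hK₁c.sub hK₂c).mono hsubT
  have hSc : IsClosed S :=
    hvc.preimage_isClosed_of_isClosed isClosed_Icc isClosed_Iic
  have hScomp : IsCompact S :=
    isCompact_Icc.of_isClosed_subset hSc inter_subset_left
  set a : ℝ := sSup S with hadef
  have haS : a ∈ S := hScomp.sSup_mem ⟨0, hS0⟩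
  have hat : a ≤ t := haS.1.2
  have ha0 : 0 ≤ a := haS.1.1
  have htS : t ∉ S := fun h => absurd h.2 (not_le.2 hlt)
  have halt : a < t := lt_of_le_of_ne hat (fun h => htS (h ▸ haS))
  have hbddS : BddAbove S := ⟨t, fun z hz => hz.1.2⟩
  have hgt : ∀ u ∈ Ioc a t, B < K₁ u - K₂ u := by
    intro u hu
    by_contra h
    push_neg at h
    have huS : u ∈ S := ⟨⟨le_trans ha0 hu.1.le, hu.2⟩, h⟩
    exact absurd (le_csSup hbddS huS) (not_le.2 hu.1)
  have hIocT : Ioc a t ⊆ Icc 0 T := fun u hu =>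
    ⟨le_trans ha0 hu.1.le, le_trans hu.2 ht.2⟩
  have haT : a ∈ Icc (0:ℝ) T := ⟨ha0, le_trans hat ht.2⟩
  -- increment inequality
  have hkey : 0 < (Kr₁ t - Kr₁ a) + (Kl₂ t - Kl₂ a) := by
    have e1 := hK₁eq t ht
    have e2 := hK₁eq a haT
    have e3 := hK₂eq t ht
    have e4 := hK₂eq a haT
    have m1 : Kl₁ a ≤ Kl₁ t := Kl₁.mono hat
    have m2 : Kr₂ a ≤ Kr₂ t := Kr₂.mono hat
    have hva : K₁ a - K₂ a ≤ B := haS.2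
    linarith
  -- find a contradiction point u
  have main : ∀ u ∈ Ioc a t,
      (r₁ u (x₁ u) ≤ 0 ∨ 0 ≤ l₂ u (x₂ u)) → K₁ u - K₂ u ≤ B := by
    intro u hu hcase
    have huT : u ∈ Icc (0:ℝ) T := hIocT hu
    have hxK₁ : K₁ u = x₁ u - s₁ u := by rw [heq₁ u huT]; ring
    have hxK₂ : K₂ u = x₂ u - s₂ u := by rw [heq₂ u huT]; ring
    have hsu : s₂ u - s₁ u ≤ ρ := (abs_sub_le_iff.1 (hs u huT)).2
    have hxd : x₁ u - x₂ u ≤ δ / c := by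
      rcases le_total (x₁ u) (x₂ u) with h | h
      · exact le_trans (by linarith) (div_nonneg hδ hc.le)
      · rcases hcase with hr | hl
        · -- r₁ u (x₁ u) ≤ 0, use r₂
          have h1 := hr₂ u huT (x₁ u) (x₂ u) h
          have h2 : 0 ≤ r₂ u (x₂ u) := (hcon₂ u huT).2
          have h3 : r₂ u (x₁ u) - r₁ u (x₁ u) ≤ δ :=
            (abs_sub_le_iff.1 (hcr u huT (x₁ u))).2
          have h4 : c * (x₁ u - x₂ u) ≤ δ := by linarith
          rw [le_div_iff₀ hc]
          linarith
        · -- 0 ≤ l₂ u (x₂ u), use l₁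
          have h1 := hl₁ u huT (x₁ u) (x₂ u) h
          have h2 : l₁ u (x₁ u) ≤ 0 := (hcon₁ u huT).1
          have h3 : l₂ u (x₂ u) - l₁ u (x₂ u) ≤ δ :=
            (abs_sub_le_iff.1 (hcl u huT (x₂ u))).2
          have h4 : c * (x₁ u - x₂ u) ≤ δ := by linarith
          rw [le_div_iff₀ hc]
          linarith
    rw [hxK₁, hxK₂, hBdef]
    linarith
  -- one of the measures of (a, t] is positive
  rcases lt_or_ge 0 (Kr₁ t - Kr₁ a) with hpos | hnonpos
  · -- Kr₁ increases; find u with r₁ u (x₁ u) ≤ 0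
    have hmeas : Kr₁.measure (Ioc a t) ≠ 0 := by
      rw [Kr₁.measure_Ioc]
      simpa using (ENNReal.ofReal_pos.2 hpos).ne'
    have hex : ∃ u ∈ Ioc a t, r₁ u (x₁ u) ≤ 0 := by
      by_contra h
      push_neg at h
      have hsub : Ioc a t ⊆ {u ∈ Icc (0:ℝ) T | 0 < r₁ u (x₁ u)} :=
        fun u hu => ⟨hIocT hu, h u hu⟩
      exact hmeas (measure_mono_null hsub hKr₁n)
    obtain ⟨u, hu, hru⟩ := hex
    exact absurd (main u hu (Or.inl hru)) (not_le.2 (hgt u hu))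
  · -- then Kl₂ increases
    have hpos2 : 0 < Kl₂ t - Kl₂ a := by linarith
    have hmeas : Kl₂.measure (Ioc a t) ≠ 0 := by
      rw [Kl₂.measure_Ioc]
      simpa using (ENNReal.ofReal_pos.2 hpos2).ne'
    have hex : ∃ u ∈ Ioc a t, 0 ≤ l₂ u (x₂ u) := by
      by_contra h
      push_neg at h
      have hsub : Ioc a t ⊆ {u ∈ Icc (0:ℝ) T | l₂ u (x₂ u) < 0} :=
        fun u hu => ⟨hIocT hu, h u hu⟩
      exact hmeas (measure_mono_null hsub hKl₂n)
    obtain ⟨u, hu, hlu⟩ := hex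
    exact absurd (main u hu (Or.inr hlu)) (not_le.2 (hgt u hu))

/-- A two-sided `c,C`-Lipschitz increasing function is `C`-Lipschitz in absolute value. -/
lemma abs_lip {c C : ℝ} (hc : 0 < c) (f : ℝ → ℝ)
    (h : ∀ p q : ℝ, q ≤ p → c * (p - q) ≤ f p - f q ∧ f p - f q ≤ C * (p - q))
    (a b : ℝ) : |f a - f b| ≤ C * |a - b| := by
  have hC : 0 ≤ C := by
    have h1 := h 1 0 zero_le_one
    norm_num at h1
    linarith
  rcases le_total b a with hab | hab
  · have h1 := h a b hab
    have hca : 0 ≤ c * (a - b) := mul_nonneg hc.le (sub_nonneg.2 hab)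
    rw [abs_of_nonneg (sub_nonneg.2 hab), abs_le]
    exact ⟨by nlinarith [h1.1], h1.2⟩
  · have h1 := h b a hab
    have hca : 0 ≤ c * (b - a) := mul_nonneg hc.le (sub_nonneg.2 hab)
    rw [abs_sub_comm, abs_sub_comm a b, abs_of_nonneg (sub_nonneg.2 hab), abs_le]
    exact ⟨by nlinarith [h1.1], h1.2⟩

/-- Closeness of integrals of Lipschitz compositions. -/
lemma integral_comp_close {Ω : Type*} [MeasurableSpace Ω] {P : Measure Ω}
    [IsProbabilityMeasure P] {C M : ℝ} (hC : 0 ≤ C) (G : Ω → ℝ → ℝ)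
    (g₁ g₂ : Ω → ℝ) (m₁ m₂ x : ℝ)
    (hLip : ∀ ω, ∀ a b : ℝ, |G ω a - G ω b| ≤ C * |a - b|)
    (hf : Integrable (fun ω => G ω (g₁ ω - m₁ + x)) P)
    (hg : Integrable (fun ω => G ω (g₂ ω - m₂ + x)) P)
    (hg₁ : Integrable g₁ P) (hg₂ : Integrable g₂ P)
    (hm : |m₁ - m₂| ≤ M)
    (hyM : ∫ ω, |g₁ ω - g₂ ω| ∂P ≤ M) :
    |∫ ω, G ω (g₁ ω - m₁ + x) ∂P - ∫ ω, G ω (g₂ ω - m₂ + x) ∂P| ≤ 2 * (C * M) := by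
  have hM0 : 0 ≤ M := le_trans (abs_nonneg _) hm
  have hint1 : Integrable (fun ω => |G ω (g₁ ω - m₁ + x) - G ω (g₂ ω - m₂ + x)|) P :=
    (hf.sub hg).abs
  have hint2a : Integrable (fun ω => C * |g₁ ω - g₂ ω|) P :=
    (hg₁.sub hg₂).abs.const_mul C
  have hint2 : Integrable (fun ω => C * |g₁ ω - g₂ ω| + C * M) P :=
    hint2a.add (integrable_const _)
  rw [← integral_sub hf hg]
  calc |∫ ω, (G ω (g₁ ω - m₁ + x) - G ω (g₂ ω - m₂ + x)) ∂P|
      ≤ ∫ ω, |G ω (g₁ ω - m₁ + x) - G ω (g₂ ω - m₂ + x)| ∂P := by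
        simpa [Real.norm_eq_abs] using
          norm_integral_le_integral_norm (μ := P)
            (fun ω => G ω (g₁ ω - m₁ + x) - G ω (g₂ ω - m₂ + x))
    _ ≤ ∫ ω, (C * |g₁ ω - g₂ ω| + C * M) ∂P := by
        refine integral_mono hint1 hint2 (fun ω => ?_)
        have h1 := hLip ω (g₁ ω - m₁ + x) (g₂ ω - m₂ + x)
        have h2 : |(g₁ ω - m₁ + x) - (g₂ ω - m₂ + x)| ≤ |g₁ ω - g₂ ω| + |m₁ - m₂| := by
          have he : (g₁ ω - m₁ + x) - (g₂ ω - m₂ + x) = (g₁ ω - g₂ ω) - (m₁ - m₂) := by ring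
          rw [he, sub_eq_add_neg]
          exact (abs_add_le _ _).trans (le_of_eq (by rw [abs_neg]))
        have h3 : C * |(g₁ ω - m₁ + x) - (g₂ ω - m₂ + x)| ≤ C * (|g₁ ω - g₂ ω| + M) :=
          mul_le_mul_of_nonneg_left (by linarith) hC
        exact h1.trans (h3.trans (le_of_eq (by ring)))
    _ = C * ∫ ω, |g₁ ω - g₂ ω| ∂P + C * M := by
        rw [integral_add hint2a (integrable_const _), MeasureTheory.integral_const_mul, integral_const]
        simp
    _ ≤ C * M + C * M := by
        have := mul_le_mul_of_nonneg_left hyM hC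
        linarith
    _ = 2 * (C * M) := by ring

/-- Stability of the reflection terms of the time-reversed Skorokhod problems
built from two families `(y¹_t)`, `(y²_t)` via upper expectations:
`sup_t |A¹_t - A²_t| ≤ (3C/c) · sup_t Ê[|y¹_t - y²_t|]`, the supremum on the
right being expressed through an arbitrary upper bound `M`. -/
theorem meanBoundary_skorokhod_stability {Ω : Type*} [MeasurableSpace Ω]
    (𝒬 : Set (Measure Ω)) (h𝒬 : 𝒬.Nonempty)
    (hprob : ∀ P ∈ 𝒬, IsProbabilityMeasure P)
    (T c C : ℝ) (hT : 0 < T) (hc : 0 < c) (hcC : c ≤ C)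
    (L R : Ω → ℝ → ℝ → ℝ)
    (hLlip : ∀ ω : Ω, ∀ t ∈ Icc (0:ℝ) T, ∀ x y : ℝ, y ≤ x →
      c * (x - y) ≤ L ω t x - L ω t y ∧ L ω t x - L ω t y ≤ C * (x - y))
    (hRlip : ∀ ω : Ω, ∀ t ∈ Icc (0:ℝ) T, ∀ x y : ℝ, y ≤ x →
      c * (x - y) ≤ R ω t x - R ω t y ∧ R ω t x - R ω t y ≤ C * (x - y))
    (y₁ y₂ : ℝ → Ω → ℝ)
    (hy₁int : ∀ P ∈ 𝒬, ∀ t ∈ Icc (0:ℝ) T, Integrable (y₁ t) P)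
    (hy₂int : ∀ P ∈ 𝒬, ∀ t ∈ Icc (0:ℝ) T, Integrable (y₂ t) P)
    (hy₁bdd : ∃ M₁ : ℝ, ∀ t ∈ Icc (0:ℝ) T, ∀ P ∈ 𝒬, ∫ ω, |y₁ t ω| ∂P ≤ M₁)
    (hy₂bdd : ∃ M₂ : ℝ, ∀ t ∈ Icc (0:ℝ) T, ∀ P ∈ 𝒬, ∫ ω, |y₂ t ω| ∂P ≤ M₂)
    (hLint : ∀ P ∈ 𝒬, ∀ t ∈ Icc (0:ℝ) T, ∀ x : ℝ,
      Integrable (fun ω => L ω t (y₁ t ω - upperExpR 𝒬 (y₁ t) + x)) P ∧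
      Integrable (fun ω => L ω t (y₂ t ω - upperExpR 𝒬 (y₂ t) + x)) P ∧
      Integrable (fun ω => R ω t (y₁ t ω - upperExpR 𝒬 (y₁ t) + x)) P ∧
      Integrable (fun ω => R ω t (y₂ t ω - upperExpR 𝒬 (y₂ t) + x)) P)
    (hbdd : ∀ t ∈ Icc (0:ℝ) T, ∀ x : ℝ,
      BddAbove ((fun P => ∫ ω, L ω t (y₁ t ω - upperExpR 𝒬 (y₁ t) + x) ∂P) '' 𝒬) ∧
      BddAbove ((fun P => ∫ ω, L ω t (y₂ t ω - upperExpR 𝒬 (y₂ t) + x) ∂P) '' 𝒬) ∧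
      BddAbove ((fun P => ∫ ω, R ω t (y₁ t ω - upperExpR 𝒬 (y₁ t) + x) ∂P) '' 𝒬) ∧
      BddAbove ((fun P => ∫ ω, R ω t (y₂ t ω - upperExpR 𝒬 (y₂ t) + x) ∂P) '' 𝒬))
    (hs₁ : ContinuousOn (fun t => upperExpR 𝒬 (y₁ (T - t))) (Icc 0 T))
    (hs₂ : ContinuousOn (fun t => upperExpR 𝒬 (y₂ (T - t))) (Icc 0 T))
    (hA₁ : AssumptionA T c C (fun t x => meanBoundary 𝒬 L y₁ (T - t) x)
      (fun t x => meanBoundary 𝒬 R y₁ (T - t) x))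
    (hA₂ : AssumptionA T c C (fun t x => meanBoundary 𝒬 L y₂ (T - t) x)
      (fun t x => meanBoundary 𝒬 R y₂ (T - t) x))
    (xb₁ A₁ xb₂ A₂ : ℝ → ℝ)
    (hsol₁ : IsSkorokhodSolution T (fun t x => meanBoundary 𝒬 L y₁ (T - t) x)
      (fun t x => meanBoundary 𝒬 R y₁ (T - t) x)
      (fun t => upperExpR 𝒬 (y₁ (T - t))) xb₁ A₁)
    (hsol₂ : IsSkorokhodSolution T (fun t x => meanBoundary 𝒬 L y₂ (T - t) x)
      (fun t x => meanBoundary 𝒬 R y₂ (T - t) x)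
      (fun t => upperExpR 𝒬 (y₂ (T - t))) xb₂ A₂)
    (M : ℝ)
    (hM : ∀ t ∈ Icc (0:ℝ) T, ∀ P ∈ 𝒬, ∫ ω, |y₁ t ω - y₂ t ω| ∂P ≤ M) :
    ∀ t ∈ Icc (0:ℝ) T, |A₁ t - A₂ t| ≤ (3 * C / c) * M := by
  obtain ⟨P₀, hP₀⟩ := h𝒬
  have hC : 0 < C := lt_of_lt_of_le hc hcC
  have h0T : (0:ℝ) ∈ Icc (0:ℝ) T := ⟨le_refl 0, hT.le⟩
  have hM0 : 0 ≤ M :=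
    le_trans (integral_nonneg fun ω => abs_nonneg _) (hM 0 h0T P₀ hP₀)
  obtain ⟨M₁, hM₁⟩ := hy₁bdd
  obtain ⟨M₂, hM₂⟩ := hy₂bdd
  have hb₁ : ∀ u ∈ Icc (0:ℝ) T, BddAbove ((fun P => ∫ ω, y₁ u ω ∂P) '' 𝒬) := by
    intro u hu
    refine ⟨M₁, ?_⟩
    rintro z ⟨P, hP, rfl⟩
    exact le_trans (integral_mono (hy₁int P hP u hu) (hy₁int P hP u hu).abs
      (fun ω => le_abs_self _)) (hM₁ u hu P hP)
  have hb₂ : ∀ u ∈ Icc (0:ℝ) T, BddAbove ((fun P => ∫ ω, y₂ u ω ∂P) '' 𝒬) := by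
    intro u hu
    refine ⟨M₂, ?_⟩
    rintro z ⟨P, hP, rfl⟩
    exact le_trans (integral_mono (hy₂int P hP u hu) (hy₂int P hP u hu).abs
      (fun ω => le_abs_self _)) (hM₂ u hu P hP)
  -- closeness of the mean processes
  have hm : ∀ u ∈ Icc (0:ℝ) T, |upperExpR 𝒬 (y₁ u) - upperExpR 𝒬 (y₂ u)| ≤ M := by
    intro u hu
    refine upperExpR_close ⟨P₀, hP₀⟩ (hb₁ u hu) (hb₂ u hu) (fun P hP => ?_)
    rw [← integral_sub (hy₁int P hP u hu) (hy₂int P hP u hu)]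
    refine le_trans ?_ (hM u hu P hP)
    simpa [Real.norm_eq_abs] using
      norm_integral_le_integral_norm (μ := P) (fun ω => y₁ u ω - y₂ u ω)
  have hLabs : ∀ ω : Ω, ∀ u ∈ Icc (0:ℝ) T, ∀ a b : ℝ,
      |L ω u a - L ω u b| ≤ C * |a - b| := fun ω u hu =>
    abs_lip hc _ (fun p q hpq => hLlip ω u hu p q hpq)
  have hRabs : ∀ ω : Ω, ∀ u ∈ Icc (0:ℝ) T, ∀ a b : ℝ,
      |R ω u a - R ω u b| ≤ C * |a - b| := fun ω u hu =>
    abs_lip hc _ (fun p q hpq => hRlip ω u hu p q hpq)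
  -- closeness of the boundaries
  have hlclose : ∀ u ∈ Icc (0:ℝ) T, ∀ x : ℝ,
      |meanBoundary 𝒬 L y₁ u x - meanBoundary 𝒬 L y₂ u x| ≤ 2 * (C * M) := by
    intro u hu x
    refine upperExpR_close ⟨P₀, hP₀⟩ (hbdd u hu x).1 (hbdd u hu x).2.1 (fun P hP => ?_)
    haveI := hprob P hP
    exact integral_comp_close hC.le (fun ω => L ω u) (y₁ u) (y₂ u)
      (upperExpR 𝒬 (y₁ u)) (upperExpR 𝒬 (y₂ u)) x (fun ω => hLabs ω u hu)
      (hLint P hP u hu x).1 (hLint P hP u hu x).2.1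
      (hy₁int P hP u hu) (hy₂int P hP u hu) (hm u hu) (hM u hu P hP)
  have hrclose : ∀ u ∈ Icc (0:ℝ) T, ∀ x : ℝ,
      |meanBoundary 𝒬 R y₁ u x - meanBoundary 𝒬 R y₂ u x| ≤ 2 * (C * M) := by
    intro u hu x
    refine upperExpR_close ⟨P₀, hP₀⟩ (hbdd u hu x).2.2.1 (hbdd u hu x).2.2.2 (fun P hP => ?_)
    haveI := hprob P hP
    exact integral_comp_close hC.le (fun ω => R ω u) (y₁ u) (y₂ u)
      (upperExpR 𝒬 (y₁ u)) (upperExpR 𝒬 (y₂ u)) x (fun ω => hRabs ω u hu)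
      (hLint P hP u hu x).2.2.1 (hLint P hP u hu x).2.2.2
      (hy₁int P hP u hu) (hy₂int P hP u hu) (hm u hu) (hM u hu P hP)
  have hrev : ∀ t ∈ Icc (0:ℝ) T, (T - t) ∈ Icc (0:ℝ) T := fun t ht =>
    ⟨by linarith [ht.2], by linarith [ht.1]⟩
  have hδ : (0:ℝ) ≤ 2 * (C * M) := by positivity
  have hone := skorokhod_one_side T c (2 * (C * M)) M hc hδ hM0 hT.le
    (fun t x => meanBoundary 𝒬 L y₁ (T - t) x) (fun t x => meanBoundary 𝒬 R y₁ (T - t) x)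
    (fun t x => meanBoundary 𝒬 L y₂ (T - t) x) (fun t x => meanBoundary 𝒬 R y₂ (T - t) x)
    (fun t => upperExpR 𝒬 (y₁ (T - t))) (fun t => upperExpR 𝒬 (y₂ (T - t))) xb₁ A₁ xb₂ A₂
    (fun t ht p q hpq => ((hA₁.2.1 t ht p q hpq).1).1)
    (fun t ht p q hpq => ((hA₂.2.1 t ht p q hpq).2).1)
    (fun t ht p => hlclose (T - t) (hrev t ht) p)
    (fun t ht p => hrclose (T - t) (hrev t ht) p)
    (fun t ht => hm (T - t) (hrev t ht))
    hsol₁ hsol₂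
  have htwo := skorokhod_one_side T c (2 * (C * M)) M hc hδ hM0 hT.le
    (fun t x => meanBoundary 𝒬 L y₂ (T - t) x) (fun t x => meanBoundary 𝒬 R y₂ (T - t) x)
    (fun t x => meanBoundary 𝒬 L y₁ (T - t) x) (fun t x => meanBoundary 𝒬 R y₁ (T - t) x)
    (fun t => upperExpR 𝒬 (y₂ (T - t))) (fun t => upperExpR 𝒬 (y₁ (T - t))) xb₂ A₂ xb₁ A₁
    (fun t ht p q hpq => ((hA₂.2.1 t ht p q hpq).1).1)
    (fun t ht p q hpq => ((hA₁.2.1 t ht p q hpq).2).1)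
    (fun t ht p => (abs_sub_comm _ _).trans_le (hlclose (T - t) (hrev t ht) p))
    (fun t ht p => (abs_sub_comm _ _).trans_le (hrclose (T - t) (hrev t ht) p))
    (fun t ht => (abs_sub_comm _ _).trans_le (hm (T - t) (hrev t ht)))
    hsol₂ hsol₁
  intro t ht
  have h1 := hone t ht
  have h2 := htwo t ht
  have hfin : 2 * (C * M) / c + M ≤ 3 * C / c * M := by
    have hcm : c * M ≤ C * M := mul_le_mul_of_nonneg_right hcC hM0
    have he1 : 2 * (C * M) / c + M = (2 * (C * M) + c * M) / c := by
      field_simp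
    have he2 : 3 * C / c * M = 3 * (C * M) / c := by ring
    rw [he1, he2]
    gcongr
    linarith
  rw [abs_le]
  constructor <;> linarith
end
end
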